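/- arXiv:1804.07896 — 8 statements merged into one kernel-verified Lean document; each statement's English description precedes it below -/
import Mathlib

section
/- Fix 0 < α < 1. Let C be a standard Cauchy random variable and set C_α := -cos(απ) + sin(απ)·C. Then P(C_α > 0) = α, and the conditional distribution of log(C_α) given the event {C_α > 0} is absolutely continuous with respect to Lebesgue measure on ℝ, with density f_α(s) = sin(απ) / (2πα·(cos(απ) + cosh(s))) for s ∈ ℝ. -/
/-!
Since `sin(απ) > 0`, the event `C_α > 0` is `C > cot(απ)`, whose Cauchy probability is
`(π/2 - arctan(cot(απ))) / π = α`. On that event `log C_α ∈ B` iff `C ∈ φ '' B` with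
`φ s = (eˢ + cos(απ)) / sin(απ)`, and the change of variables `c = φ s` turns the Cauchy density
into `eˢ / sin(απ) · 1 / (π (1 + φ(s)²)) = sin(απ) / (2π (cos(απ) + cosh s))`, because
`sin² + (eˢ + cos)² = 2eˢ (cos + cosh s)`.
-/

open MeasureTheory ProbabilityTheory

/-- The standard Cauchy distribution on `ℝ`: the probability measure with density
`c ↦ 1 / (π * (1 + c²))` with respect to Lebesgue measure. -/
noncomputable def cauchyMeasure : Measure ℝ :=
  MeasureTheory.volume.withDensity fun c => ENNReal.ofReal (1 / (Real.pi * (1 + c ^ 2)))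

open Real Set

lemma cauchyMeasure_Ioi (a : ℝ) :
    _root_.cauchyMeasure (Ioi a) = ENNReal.ofReal ((π / 2 - arctan a) / π) := by
  have hdensity : ∀ x : ℝ, 1 / (π * (1 + x ^ 2)) = π⁻¹ * (1 + x ^ 2)⁻¹ := fun x => by
    rw [one_div, mul_inv]
  rw [_root_.cauchyMeasure, withDensity_apply _ measurableSet_Ioi,
    ← ofReal_integral_eq_lintegral_ofReal]
  · simp_rw [hdensity, integral_const_mul, integral_Ioi_inv_one_add_sq, inv_mul_eq_div]
  · simp_rw [hdensity]
    exact (integrable_inv_one_add_sq.const_mul _).integrableOn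
  · filter_upwards with x
    positivity

lemma arctan_cos_div_sin {θ : ℝ} (h0 : 0 < θ) (hπ : θ < π) :
    arctan (cos θ / sin θ) = π / 2 - θ := by
  rw [← inv_div, ← tan_eq_sin_div_cos, ← tan_pi_div_two_sub, arctan_tan] <;> linarith

lemma cauchyMeasure_Ioi_cos_div_sin {θ : ℝ} (h0 : 0 < θ) (hπ : θ < π) :
    _root_.cauchyMeasure (Ioi (cos θ / sin θ)) = ENNReal.ofReal (θ / π) := by
  rw [cauchyMeasure_Ioi, arctan_cos_div_sin h0 hπ, sub_sub_cancel]

lemma one_add_sq_exp_add_cos_div_sin (θ s : ℝ) (hθ : sin θ ≠ 0) :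
    1 + ((exp s + cos θ) / sin θ) ^ 2 = 2 * exp s * (cos θ + cosh s) / sin θ ^ 2 := by
  rw [cosh_eq, exp_neg]
  field_simp
  linear_combination sin_sq_add_cos_sq θ

lemma exp_div_sin_mul_cauchy_density (θ s : ℝ) (hθ : sin θ ≠ 0) :
    exp s / sin θ * (1 / (π * (1 + ((exp s + cos θ) / sin θ) ^ 2))) =
      sin θ / (2 * π * (cos θ + cosh s)) := by
  have hpos : 0 < 2 * exp s * (cos θ + cosh s) / sin θ ^ 2 := by
    rw [← one_add_sq_exp_add_cos_div_sin θ s hθ]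
    positivity
  have hcosh : cos θ + cosh s ≠ 0 := by
    rintro h
    simp [h] at hpos
  rw [one_add_sq_exp_add_cos_div_sin θ s hθ]
  field_simp

lemma measurableEmbedding_exp_add_div (c : ℝ) {a : ℝ} (ha : a ≠ 0) :
    MeasurableEmbedding fun s => (exp s + c) / a := by
  refine Measurable.measurableEmbedding (by fun_prop) fun x y hxy => exp_injective ?_
  simpa [ha] using hxy

lemma cauchyMeasure_image_exp_add_cos_div_sin {θ : ℝ} (hθ : 0 < sin θ) {B : Set ℝ}
    (hB : MeasurableSet B) :
    _root_.cauchyMeasure ((fun s => (exp s + cos θ) / sin θ) '' B) =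
      ∫⁻ s in B, ENNReal.ofReal (sin θ / (2 * π * (cos θ + cosh s))) := by
  have hderiv : ∀ s ∈ B, HasDerivWithinAt (fun s => (exp s + cos θ) / sin θ)
      (exp s / sin θ) B s := fun s _ =>
    (((hasDerivAt_exp s).add_const _).div_const _).hasDerivWithinAt
  have hemb := measurableEmbedding_exp_add_div (cos θ) hθ.ne'
  rw [_root_.cauchyMeasure, withDensity_apply _ (hemb.measurableSet_image.2 hB),
    lintegral_image_eq_lintegral_abs_deriv_mul hB hderiv hemb.injective.injOn]
  refine setLIntegral_congr_fun hB fun s _ => ?_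
  rw [← ENNReal.ofReal_mul (abs_nonneg _), abs_of_pos (by positivity),
    exp_div_sin_mul_cauchy_density θ s hθ.ne']

lemma setOf_pos_neg_add_mul {a : ℝ} (ha : 0 < a) (c : ℝ) :
    {x : ℝ | 0 < -c + a * x} = Ioi (c / a) := by
  ext x
  rw [mem_ofPred_eq, mem_Ioi, div_lt_iff₀ ha]
  constructor <;> intro h <;> linarith

lemma setOf_log_mem_inter_setOf_pos {a : ℝ} (ha : a ≠ 0) (c : ℝ) (B : Set ℝ) :
    {x : ℝ | log (-c + a * x) ∈ B} ∩ {x | 0 < -c + a * x} = (fun s => (exp s + c) / a) '' B := by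
  ext x
  simp only [mem_inter_iff, mem_ofPred_eq, mem_image, div_eq_iff ha]
  constructor
  · rintro ⟨hlog, hpos⟩
    exact ⟨_, hlog, by rw [exp_log hpos]; ring⟩
  · rintro ⟨s, hs, hx⟩
    have : -c + a * x = exp s := by linarith
    rw [this, log_exp]
    exact ⟨hs, exp_pos s⟩

lemma lintegral_ofReal_div_ofReal {X : Type*} [MeasurableSpace X] (ν : Measure X)
    (f : X → ℝ) {a : ℝ} (ha : 0 < a) :
    (∫⁻ x, ENNReal.ofReal (f x) ∂ν) / ENNReal.ofReal a = ∫⁻ x, ENNReal.ofReal (f x / a) ∂ν := by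
  simp_rw [div_eq_mul_inv, ← lintegral_mul_const' _ _ (ENNReal.inv_ne_top.2 (ENNReal.ofReal_pos.2 ha).ne'),
    ← div_eq_mul_inv, ENNReal.ofReal_div_of_pos ha]

/-- Talacko–Zolotarev: for `0 < α < 1` and `C_α := -cos(απ) + sin(απ)·C` with `C` standard
Cauchy, `P(C_α > 0) = α` and the conditional law of `log C_α` given `{C_α > 0}` has density
`s ↦ sin(απ) / (2πα (cos(απ) + cosh s))`. -/
theorem stmt0 {Ω : Type*} [MeasurableSpace Ω] (μ : Measure Ω) [IsProbabilityMeasure μ]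
    (α : ℝ) (hα0 : 0 < α) (hα1 : α < 1)
    (C : Ω → ℝ) (hCmeas : Measurable C) (hClaw : Measure.map C μ = _root_.cauchyMeasure)
    (Cα : Ω → ℝ)
    (hCα : ∀ ω, Cα ω = -Real.cos (α * Real.pi) + Real.sin (α * Real.pi) * C ω) :
    μ {ω | 0 < Cα ω} = ENNReal.ofReal α ∧
      ∀ B : Set ℝ, MeasurableSet B →
        μ ({ω | Real.log (Cα ω) ∈ B} ∩ {ω | 0 < Cα ω}) / μ {ω | 0 < Cα ω} =
          ∫⁻ s in B, ENNReal.ofReal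
            (Real.sin (α * Real.pi) /
              (2 * Real.pi * α * (Real.cos (α * Real.pi) + Real.cosh s))) := by
  obtain rfl : Cα = fun ω => -cos (α * π) + sin (α * π) * C ω := funext hCα
  have hθ0 : 0 < α * π := by positivity
  have hθπ : α * π < π := mul_lt_of_lt_one_left pi_pos hα1
  have hsin : 0 < sin (α * π) := sin_pos_of_pos_of_lt_pi hθ0 hθπ
  have hpos : μ (C ⁻¹' {x | 0 < -cos (α * π) + sin (α * π) * x}) = ENNReal.ofReal α := by
    rw [setOf_pos_neg_add_mul hsin, ← Measure.map_apply hCmeas measurableSet_Ioi, hClaw,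
      cauchyMeasure_Ioi_cos_div_sin hθ0 hθπ, mul_div_cancel_right₀ _ pi_ne_zero]
  refine ⟨hpos, fun B hB => ?_⟩
  have hemb := measurableEmbedding_exp_add_div (cos (α * π)) hsin.ne'
  change μ (C ⁻¹' ({x | log (-cos (α * π) + sin (α * π) * x) ∈ B} ∩
    {x | 0 < -cos (α * π) + sin (α * π) * x})) /
    μ (C ⁻¹' {x | 0 < -cos (α * π) + sin (α * π) * x}) = _
  rw [hpos, setOf_log_mem_inter_setOf_pos hsin.ne',
    ← Measure.map_apply hCmeas (hemb.measurableSet_image.2 hB), hClaw,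
    cauchyMeasure_image_exp_add_cos_div_sin hsin hB, lintegral_ofReal_div_ofReal _ _ hα0]
  congr! 3 with s
  rw [div_div]
  ring
end

section
/- Let θ > 0, a ∈ ℝ, d ≥ 1, and let X and Y be random vectors with values in ℝ^d. Let γ be a Gamma(θ)-distributed random variable independent of X, and let γ' be a Gamma(θ)-distributed random variable independent of Y. Then γ^a·X and γ'^a·Y have the same distribution if and only if X and Y have the same distribution. -/
/-!
For a bounded continuous `f ≥ 0` put `g_X(s) = E f(s^a X)`. By independence,
`∫ g_X(ρ s) dΓ(s) = E f(ρ^a γ^a X)` for every `ρ > 0`, so equal laws of `γ^a X` and `γ'^a Y`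
make all these scaled Gamma averages of `g_X` and `g_Y` agree. Multiplying the Gamma density by
`e^{-n s}` only rescales it, so these averages are exactly the moments of `e^{-s}` under the
measures `g_X Γ` and `g_Y Γ`, which live on `[0, 1]` and are therefore determined by their moments
(Weierstrass). Hence `g_X = g_Y` almost everywhere, and since both are continuous at `s = 1` and
`1` lies in the support of `Γ`, `E f(X) = E f(Y)`.
-/

open MeasureTheory ProbabilityTheory Set Filter Topology Real
open scoped ENNReal NNReal BoundedContinuousFunction

lemma Continuous.integrable_of_ae_mem_isCompact {X : Type*} [MeasurableSpace X]
    [TopologicalSpace X] [OpensMeasurableSpace X] [T2Space X] {μ : Measure X} [IsFiniteMeasure μ]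
    {K : Set X} {f : X → ℝ} (hf : Continuous f) (hK : IsCompact K) (hμ : ∀ᵐ x ∂μ, x ∈ K) :
    Integrable f μ := by
  rw [← Measure.restrict_eq_self_of_ae_mem hμ]
  exact hf.continuousOn.integrableOn_compact hK

lemma Filter.EventuallyEq.eq_of_mem_support {X Y : Type*} [MeasurableSpace X]
    [TopologicalSpace X] [TopologicalSpace Y] [T2Space Y] {μ : Measure X} {f g : X → Y} {x : X}
    (h : f =ᵐ[μ] g) (hx : x ∈ μ.support) (hf : ContinuousAt f x) (hg : ContinuousAt g x) :
    f x = g x := by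
  by_contra hne
  have hU : {y | f y ≠ g y} ∈ 𝓝 x :=
    hf.prodMk_nhds hg ((isClosed_diagonal (X := Y)).isOpen_compl.mem_nhds hne)
  exact ((Measure.mem_support_iff_forall x).mp hx _ hU).ne' h

namespace MeasureTheory.Measure

variable {μ ν : Measure ℝ} [IsFiniteMeasure μ] [IsFiniteMeasure ν] {a b : ℝ}

lemma integral_eval_eq_of_integral_pow_eq (hμ : ∀ᵐ x ∂μ, x ∈ Icc a b)
    (hν : ∀ᵐ x ∂ν, x ∈ Icc a b) (h : ∀ n : ℕ, ∫ x, x ^ n ∂μ = ∫ x, x ^ n ∂ν)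
    (p : Polynomial ℝ) : ∫ x, p.eval x ∂μ = ∫ x, p.eval x ∂ν := by
  induction p using Polynomial.induction_on' with
  | add p q hp hq =>
    simp only [Polynomial.eval_add]
    rw [integral_add, integral_add, hp, hq] <;>
      exact (Polynomial.continuous _).integrable_of_ae_mem_isCompact isCompact_Icc ‹_›
  | monomial n c => simp [integral_const_mul, h n]

lemma dist_integral_le_of_abs_sub_lt {m : Measure ℝ} [IsFiniteMeasure m]
    (hm : ∀ᵐ x ∂m, x ∈ Icc a b) {f g : ℝ → ℝ} (hf : Continuous f) (hg : Continuous g) {ε : ℝ}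
    (hfg : ∀ x ∈ Icc a b, |g x - f x| < ε) :
    dist (∫ x, f x ∂m) (∫ x, g x ∂m) ≤ ε * m.real univ := by
  rw [dist_eq_norm, ← integral_sub (hf.integrable_of_ae_mem_isCompact isCompact_Icc hm)
    (hg.integrable_of_ae_mem_isCompact isCompact_Icc hm)]
  refine norm_integral_le_of_norm_le_const ?_
  filter_upwards [hm] with x hx
  rw [Real.norm_eq_abs, abs_sub_comm]
  exact (hfg x hx).le

theorem ext_of_integral_pow_eq (hμ : ∀ᵐ x ∂μ, x ∈ Icc a b) (hν : ∀ᵐ x ∂ν, x ∈ Icc a b)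
    (h : ∀ n : ℕ, ∫ x, x ^ n ∂μ = ∫ x, x ^ n ∂ν) : μ = ν := by
  refine ext_of_forall_integral_eq_of_IsFiniteMeasure fun f => ?_
  set C := μ.real univ + ν.real univ + 1
  have hC : 0 < C := by positivity
  refine eq_of_forall_dist_le fun ε hε => ?_
  obtain ⟨p, hp⟩ := exists_polynomial_near_of_continuousOn a b f f.continuous.continuousOn
    (ε / C) (div_pos hε hC)
  have hμp := dist_integral_le_of_abs_sub_lt hμ f.continuous p.continuous hp
  have hνp := dist_integral_le_of_abs_sub_lt hν f.continuous p.continuous hp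
  calc dist (∫ x, f x ∂μ) (∫ x, f x ∂ν)
      ≤ dist (∫ x, f x ∂μ) (∫ x, p.eval x ∂μ) + dist (∫ x, f x ∂ν) (∫ x, p.eval x ∂ν) := by
        rw [integral_eval_eq_of_integral_pow_eq hμ hν h p, dist_comm (∫ x, f x ∂ν)]
        exact dist_triangle _ _ _
    _ ≤ ε / C * (μ.real univ + ν.real univ) := by rw [mul_add]; exact add_le_add hμp hνp
    _ ≤ ε := by
        rw [div_mul_eq_mul_div, div_le_iff₀ hC]
        nlinarith

end MeasureTheory.Measure

namespace ProbabilityTheory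

section Gamma

variable {a r c : ℝ}

@[fun_prop]
lemma measurable_gammaPDF (a r : ℝ) : Measurable (gammaPDF a r) :=
  (measurable_gammaPDFReal a r).ennreal_ofReal

lemma ae_nonneg_gammaMeasure (a r : ℝ) : ∀ᵐ x ∂gammaMeasure a r, 0 ≤ x := by
  rw [ae_iff, gammaMeasure, withDensity_apply' _ _]
  simp only [not_le]
  exact lintegral_gammaPDF_of_nonpos le_rfl

lemma mem_support_gammaMeasure (ha : 0 < a) (hr : 0 < r) {x : ℝ} (hx : 0 < x) :
    x ∈ (gammaMeasure a r).support := by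
  refine (Measure.mem_support_iff_forall x).mpr fun U hU => ?_
  rw [gammaMeasure, withDensity_apply' _ _, setLIntegral_pos_iff (measurable_gammaPDF a r)]
  refine Measure.measure_pos_of_mem_nhds volume
    (inter_mem (mem_of_superset (Ioi_mem_nhds hx) fun y hy => ?_) hU)
  exact (ENNReal.ofReal_pos.mpr (gammaPDFReal_pos ha hr hy)).ne'

lemma gammaPDF_eq_ofReal_mul_gammaPDF_mul (hc : 0 < c) (hr : 0 ≤ r) (x : ℝ) :
    gammaPDF a r x = ENNReal.ofReal c * gammaPDF a (r / c) (c * x) := by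
  rcases lt_or_ge x 0 with hx | hx
  · rw [gammaPDF_of_neg hx, gammaPDF_of_neg (mul_neg_of_pos_of_neg hc hx), mul_zero]
  rw [gammaPDF_of_nonneg hx, gammaPDF_of_nonneg (by positivity), ← ENNReal.ofReal_mul hc.le,
    div_rpow hr hc.le, mul_rpow hc.le hx, rpow_sub_one hc.ne']
  congr 1
  have := (rpow_pos_of_pos hc a).ne'
  field_simp

lemma ofReal_exp_neg_mul_mul_gammaPDF (hr : 0 ≤ r) (hrc : 0 < r + c) (x : ℝ) :
    ENNReal.ofReal (exp (-(c * x))) * gammaPDF a r x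
      = ENNReal.ofReal ((r / (r + c)) ^ a) * gammaPDF a (r + c) x := by
  rcases lt_or_ge x 0 with hx | hx
  · rw [gammaPDF_of_neg hx, gammaPDF_of_neg hx, mul_zero, mul_zero]
  rw [gammaPDF_of_nonneg hx, gammaPDF_of_nonneg hx, ← ENNReal.ofReal_mul (exp_pos _).le,
    ← ENNReal.ofReal_mul (by positivity), div_rpow hr hrc.le]
  congr 1
  have := (rpow_pos_of_pos hrc a).ne'
  rw [add_mul, neg_add, exp_add]
  field_simp

lemma lintegral_comp_mul_gammaMeasure (hc : 0 < c) (hr : 0 ≤ r) {g : ℝ → ℝ≥0∞}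
    (hg : Measurable g) :
    ∫⁻ x, g (c * x) ∂gammaMeasure a r = ∫⁻ x, g x ∂gammaMeasure a (r / c) := by
  rw [gammaMeasure, gammaMeasure,
    lintegral_withDensity_eq_lintegral_mul _ (measurable_gammaPDF _ _)
      (g := fun x => g (c * x)) (by fun_prop),
    lintegral_withDensity_eq_lintegral_mul _ (measurable_gammaPDF _ _) hg]
  simp_rw [Pi.mul_apply, gammaPDF_eq_ofReal_mul_gammaPDF_mul hc hr, mul_assoc]
  rw [lintegral_const_mul _ (by fun_prop),
    ← lintegral_map (f := fun x => gammaPDF a (r / c) x * g x) (by fun_prop)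
      (measurable_const_mul c),
    Real.map_volume_mul_left hc.ne', lintegral_smul_measure, smul_eq_mul, ← mul_assoc,
    ← ENNReal.ofReal_mul hc.le, abs_inv, abs_of_pos hc, mul_inv_cancel₀ hc.ne',
    ENNReal.ofReal_one, one_mul]

lemma lintegral_exp_neg_mul_mul_gammaMeasure (hr : 0 ≤ r) (hrc : 0 < r + c) {g : ℝ → ℝ≥0∞}
    (hg : Measurable g) :
    ∫⁻ x, ENNReal.ofReal (exp (-(c * x))) * g x ∂gammaMeasure a r
      = ENNReal.ofReal ((r / (r + c)) ^ a) * ∫⁻ x, g x ∂gammaMeasure a (r + c) := by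
  rw [gammaMeasure, gammaMeasure,
    lintegral_withDensity_eq_lintegral_mul _ (measurable_gammaPDF _ _)
      (g := fun x => ENNReal.ofReal (exp (-(c * x))) * g x) (by fun_prop),
    lintegral_withDensity_eq_lintegral_mul _ (measurable_gammaPDF _ _) hg,
    ← lintegral_const_mul _ ((measurable_gammaPDF _ _).mul hg)]
  congr 1 with x
  rw [Pi.mul_apply, Pi.mul_apply, ← mul_assoc, mul_comm (gammaPDF a r x), ← mul_assoc,
    ofReal_exp_neg_mul_mul_gammaPDF hr hrc, mul_assoc]

lemma lintegral_exp_neg_pow_mul_gammaMeasure (hr : 0 < r) (n : ℕ) {g : ℝ → ℝ≥0∞}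
    (hg : Measurable g) :
    ∫⁻ x, ENNReal.ofReal (exp (-x) ^ n) * g x ∂gammaMeasure a r
      = ENNReal.ofReal ((r / (r + n)) ^ a) * ∫⁻ x, g (r / (r + n) * x) ∂gammaMeasure a r := by
  have hrn : 0 < r + n := by positivity
  simp_rw [← Real.exp_nat_mul, mul_neg]
  rw [lintegral_exp_neg_mul_mul_gammaMeasure hr.le hrn hg,
    lintegral_comp_mul_gammaMeasure (div_pos hr hrn) hr.le hg, div_div_cancel₀ hr.ne']

end Gamma

section LaplaceUniqueness

variable {a r : ℝ}

lemma ae_mem_Icc_map_exp_neg_withDensity_gammaMeasure (g : ℝ → ℝ≥0∞) :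
    ∀ᵐ y ∂((gammaMeasure a r).withDensity g).map (fun x => exp (-x)), y ∈ Icc (0 : ℝ) 1 := by
  refine (ae_map_iff (p := (· ∈ Icc (0 : ℝ) 1)) (by fun_prop) measurableSet_Icc).mpr ?_
  filter_upwards [(withDensity_absolutelyContinuous _ g).ae_le (ae_nonneg_gammaMeasure a r)]
    with x hx
  exact ⟨(exp_pos _).le, exp_le_one_iff.mpr (neg_nonpos.mpr hx)⟩

lemma integral_pow_map_exp_neg_withDensity_gammaMeasure (hr : 0 < r) {g : ℝ → ℝ≥0∞}
    (hg : Measurable g) (n : ℕ) :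
    ∫ y, y ^ n ∂((gammaMeasure a r).withDensity g).map (fun x => exp (-x))
      = (ENNReal.ofReal ((r / (r + n)) ^ a)
          * ∫⁻ x, g (r / (r + n) * x) ∂gammaMeasure a r).toReal := by
  rw [integral_map (by fun_prop) (by fun_prop),
    integral_eq_lintegral_of_nonneg_ae (ae_of_all _ fun x => by positivity) (by fun_prop),
    lintegral_withDensity_eq_lintegral_mul _ hg (by fun_prop),
    ← lintegral_exp_neg_pow_mul_gammaMeasure hr n hg]
  simp_rw [Pi.mul_apply, mul_comm]

theorem ae_eq_of_lintegral_comp_mul_gammaMeasure_eq (hr : 0 < r) {g₁ g₂ : ℝ → ℝ≥0∞}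
    (hg₁ : Measurable g₁) (hg₂ : Measurable g₂) (hfin : ∫⁻ x, g₁ x ∂gammaMeasure a r ≠ ∞)
    (h : ∀ ρ, 0 < ρ → ∫⁻ x, g₁ (ρ * x) ∂gammaMeasure a r = ∫⁻ x, g₂ (ρ * x) ∂gammaMeasure a r) :
    g₁ =ᵐ[gammaMeasure a r] g₂ := by
  have h₁ : ∫⁻ x, g₁ x ∂gammaMeasure a r = ∫⁻ x, g₂ x ∂gammaMeasure a r := by
    simpa only [one_mul] using h 1 one_pos
  have := isFiniteMeasure_withDensity hfin
  have := isFiniteMeasure_withDensity (h₁ ▸ hfin)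
  have hE : MeasurableEmbedding fun x : ℝ => exp (-x) :=
    (by fun_prop : Continuous fun x : ℝ => exp (-x)).measurableEmbedding
      (exp_injective.comp neg_injective)
  rw [← withDensity_eq_iff hg₁.aemeasurable hg₂.aemeasurable hfin]
  refine hE.map_injective (Measure.ext_of_integral_pow_eq
    (ae_mem_Icc_map_exp_neg_withDensity_gammaMeasure g₁)
    (ae_mem_Icc_map_exp_neg_withDensity_gammaMeasure g₂) fun n => ?_)
  rw [integral_pow_map_exp_neg_withDensity_gammaMeasure hr hg₁,
    integral_pow_map_exp_neg_withDensity_gammaMeasure hr hg₂, h _ (by positivity)]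

end LaplaceUniqueness

section ScaleMixture

variable {E : Type*} [NormedAddCommGroup E] [NormedSpace ℝ E] [MeasurableSpace E] [BorelSpace E]

lemma continuous_lintegral_comp_smul (f : E →ᵇ ℝ≥0) (P : Measure E) [IsFiniteMeasure P] :
    Continuous fun c : ℝ => ∫⁻ x, f (c • x) ∂P := by
  have hf : Continuous fun p : ℝ × E => (f (p.1 • p.2) : ℝ≥0∞) := by fun_prop
  refine continuous_iff_continuousAt.mpr fun c => ?_
  exact tendsto_lintegral_filter_of_dominated_convergence (fun _ => nndist f 0)
    (.of_forall fun c' => (hf.comp (Continuous.prodMk_right c')).measurable)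
    (.of_forall fun c' => ae_of_all _ fun x =>
      ENNReal.coe_le_coe.mpr (BoundedContinuousFunction.NNReal.upper_bound f _))
    (IsFiniteMeasure.lintegral_lt_top_of_bounded_to_ennreal P ⟨_, fun _ => le_rfl⟩).ne
    (ae_of_all _ fun x => (hf.comp (Continuous.prodMk_left x)).continuousAt)

variable [SecondCountableTopology E]

lemma IndepFun.map_rpow_smul_eq {Ω : Type*} [MeasurableSpace Ω] {μ : Measure Ω}
    [IsFiniteMeasure μ] {γ : Ω → ℝ} {X : Ω → E} (h : γ ⟂ᵢ[μ] X) (hγ : Measurable γ)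
    (hX : Measurable X) (a : ℝ) :
    μ.map (fun ω => γ ω ^ a • X ω) = ((μ.map γ).prod (μ.map X)).map (fun p => p.1 ^ a • p.2) := by
  rw [← (indepFun_iff_map_prod_eq_prod_map_map hγ.aemeasurable hX.aemeasurable).mp h,
    Measure.map_map (by fun_prop) (by fun_prop)]
  rfl

lemma lintegral_lintegral_mul_rpow_smul (a : ℝ) {f : E → ℝ≥0∞} (hf : Measurable f)
    {Γ : Measure ℝ} [SFinite Γ] (hΓ : ∀ᵐ s ∂Γ, 0 ≤ s) (P : Measure E) [SFinite P] {ρ : ℝ}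
    (hρ : 0 ≤ ρ) :
    ∫⁻ s, ∫⁻ x, f ((ρ * s) ^ a • x) ∂P ∂Γ
      = ∫⁻ z, f (ρ ^ a • z) ∂(Γ.prod P).map (fun p => p.1 ^ a • p.2) := by
  rw [lintegral_map (by fun_prop) (by fun_prop), lintegral_prod _ (by fun_prop)]
  refine lintegral_congr_ae ?_
  filter_upwards [hΓ] with s hs
  simp_rw [mul_rpow hρ hs, mul_smul]

theorem eq_of_map_rpow_smul_prod_gammaMeasure_eq {θ r : ℝ} (hθ : 0 < θ) (hr : 0 < r) (a : ℝ)
    {P Q : Measure E} [IsFiniteMeasure P] [IsFiniteMeasure Q]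
    (h : ((gammaMeasure θ r).prod P).map (fun p => p.1 ^ a • p.2)
      = ((gammaMeasure θ r).prod Q).map (fun p => p.1 ^ a • p.2)) :
    P = Q := by
  have := isProbabilityMeasure_gammaMeasure hθ hr
  refine ext_of_forall_lintegral_eq_of_IsFiniteMeasure fun f => ?_
  let g (ν : Measure E) (s : ℝ) : ℝ≥0∞ := ∫⁻ x, (f (s ^ a • x) : ℝ≥0∞) ∂ν
  have hg (ν : Measure E) [IsFiniteMeasure ν] : Measurable (g ν) :=
    Measurable.lintegral_prod_right' (f := fun p : ℝ × E => (f (p.1 ^ a • p.2) : ℝ≥0∞))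
      (by fun_prop)
  have hgρ (ν : Measure E) [IsFiniteMeasure ν] (ρ : ℝ) (hρ : 0 < ρ) :
      ∫⁻ s, g ν (ρ * s) ∂gammaMeasure θ r
        = ∫⁻ z, f (ρ ^ a • z) ∂((gammaMeasure θ r).prod ν).map (fun p => p.1 ^ a • p.2) :=
    lintegral_lintegral_mul_rpow_smul a (f := fun z => (f z : ℝ≥0∞)) (by fun_prop)
      (ae_nonneg_gammaMeasure θ r) ν hρ.le
  have hfin : ∫⁻ s, g P s ∂gammaMeasure θ r ≠ ∞ := by
    have h₁ := hgρ P 1 one_pos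
    simp only [one_mul, one_rpow, one_smul] at h₁
    exact h₁ ▸ (f.lintegral_lt_top_of_nnreal _).ne
  have hcont (ν : Measure E) [IsFiniteMeasure ν] : ContinuousAt (g ν) 1 :=
    (continuous_lintegral_comp_smul f ν).continuousAt.comp
      (continuousAt_rpow_const 1 a (Or.inl one_ne_zero))
  have hae : g P =ᵐ[gammaMeasure θ r] g Q :=
    ae_eq_of_lintegral_comp_mul_gammaMeasure_eq hr (hg P) (hg Q) hfin
      fun ρ hρ => by rw [hgρ P ρ hρ, hgρ Q ρ hρ, h]
  simpa [g] using
    hae.eq_of_mem_support (mem_support_gammaMeasure hθ hr one_pos) (hcont P) (hcont Q)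

end ScaleMixture

end ProbabilityTheory

theorem stmt3_general {Ω : Type*} [MeasurableSpace Ω] (μ : Measure Ω) [IsProbabilityMeasure μ]
    (θ : ℝ) (hθ : 0 < θ) (a : ℝ) (d : ℕ)
    (X Y : Ω → Fin d → ℝ) (hX : Measurable X) (hY : Measurable Y)
    (γ γ' : Ω → ℝ) (hγ : Measurable γ) (hγ' : Measurable γ')
    (hγlaw : Measure.map γ μ = gammaMeasure θ 1)
    (hγ'law : Measure.map γ' μ = gammaMeasure θ 1)
    (hindepX : IndepFun γ X μ) (hindepY : IndepFun γ' Y μ) :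
    Measure.map (fun ω => γ ω ^ a • X ω) μ = Measure.map (fun ω => γ' ω ^ a • Y ω) μ ↔
      Measure.map X μ = Measure.map Y μ := by
  have := Measure.isProbabilityMeasure_map (μ := μ) hX.aemeasurable
  have := Measure.isProbabilityMeasure_map (μ := μ) hY.aemeasurable
  rw [hindepX.map_rpow_smul_eq hγ hX, hindepY.map_rpow_smul_eq hγ' hY, hγlaw, hγ'law]
  exact ⟨eq_of_map_rpow_smul_prod_gammaMeasure_eq hθ one_pos a, fun h => by rw [h]⟩

/-- Cancellation of independent gamma variables: for `θ > 0`, `a ∈ ℝ`, random vectors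
`X, Y` in `ℝ^d` and `Gamma(θ)` variables `γ ⫫ X`, `γ' ⫫ Y`, the laws of `γ^a • X` and
`γ'^a • Y` coincide iff the laws of `X` and `Y` coincide. -/
theorem stmt3 {Ω : Type*} [MeasurableSpace Ω] (μ : Measure Ω) [IsProbabilityMeasure μ]
    (θ : ℝ) (hθ : 0 < θ) (a : ℝ) (d : ℕ) (hd : 1 ≤ d)
    (X Y : Ω → Fin d → ℝ) (hX : Measurable X) (hY : Measurable Y)
    (γ γ' : Ω → ℝ) (hγ : Measurable γ) (hγ' : Measurable γ')
    (hγlaw : Measure.map γ μ = gammaMeasure θ 1)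
    (hγ'law : Measure.map γ' μ = gammaMeasure θ 1)
    (hindepX : IndepFun γ X μ) (hindepY : IndepFun γ' Y μ) :
    Measure.map (fun ω => γ ω ^ a • X ω) μ = Measure.map (fun ω => γ' ω ^ a • Y ω) μ ↔
      Measure.map X μ = Measure.map Y μ :=
  stmt3_general μ θ hθ a d X Y hX hY γ γ' hγ hγ' hγlaw hγ'law hindepX hindepY
end

section
/- Fix 0 < α < 1. Let T be a standard stable(α) random variable and let ε be a standard exponential random variable independent of T. Then the random variable (ε/T)^α has the standard exponential distribution. -/
/-!
Given `T`, the event `ε ≤ s T` has probability `1 - exp (-s T)`, so by independence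
`P(ε ≤ s T) = 1 - E[exp (-s T)] = 1 - exp (-s ^ α)`. Both `ε` and `T` are a.s. positive (for `T`
because its Laplace transform vanishes at infinity), so `(ε / T) ^ α ≤ t` is a.s. the event
`ε ≤ t ^ (1 / α) T`, which therefore has probability `1 - exp (-t)`.
-/

open MeasureTheory ProbabilityTheory Set Filter Topology

lemma expMeasure_Iic {r : ℝ} (hr : 0 < r) (x : ℝ) :
    expMeasure r (Iic x) = ENNReal.ofReal (if 0 ≤ x then 1 - Real.exp (-(r * x)) else 0) := by
  have := isProbabilityMeasure_expMeasure hr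
  rw [← ofReal_cdf, cdf_expMeasure_eq hr]

lemma exp_neg_mul_le_one {l t : ℝ} (hl : 0 ≤ l) (ht : 0 ≤ t) : Real.exp (-(l * t)) ≤ 1 :=
  Real.exp_le_one_iff.2 (neg_nonpos.2 (mul_nonneg hl ht))

section

variable {Ω : Type*} [MeasurableSpace Ω] {μ : Measure Ω}

lemma ae_pos_of_map_eq_expMeasure {r : ℝ} (hr : 0 < r) {X : Ω → ℝ} (hX : AEMeasurable X μ)
    (hlaw : μ.map X = expMeasure r) : ∀ᵐ ω ∂μ, 0 < X ω := by
  rw [ae_iff]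
  simp_rw [not_lt]
  change μ (X ⁻¹' Iic 0) = 0
  rw [← Measure.map_apply_of_aemeasurable hX measurableSet_Iic, hlaw, expMeasure_Iic hr]
  simp

variable {T : Ω → ℝ}

lemma integrable_exp_neg_mul [IsFiniteMeasure μ] (hT : AEMeasurable T μ) (hT0 : 0 ≤ᵐ[μ] T)
    {l : ℝ} (hl : 0 ≤ l) : Integrable (fun ω => Real.exp (-(l * T ω))) μ := by
  refine (integrable_const 1).mono' (hT.const_mul l).neg.exp.aestronglyMeasurable ?_
  filter_upwards [hT0] with ω hω
  rw [Real.norm_of_nonneg (Real.exp_pos _).le]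
  exact exp_neg_mul_le_one hl hω

lemma measureReal_nonpos_le_integral_exp_neg_mul [IsFiniteMeasure μ] (hT : AEMeasurable T μ)
    (hT0 : 0 ≤ᵐ[μ] T) {l : ℝ} (hl : 0 ≤ l) :
    μ.real {ω | T ω ≤ 0} ≤ ∫ ω, Real.exp (-(l * T ω)) ∂μ := by
  calc μ.real {ω | T ω ≤ 0} = ∫ ω in {ω | T ω ≤ 0}, Real.exp (-(l * T ω)) ∂μ := by
        rw [setIntegral_congr_ae₀ (s := {ω | T ω ≤ 0}) (g := fun _ => (1 : ℝ))
          (hT.nullMeasurable measurableSet_Iic), setIntegral_const, smul_eq_mul, mul_one]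
        filter_upwards [hT0] with ω hω hmem
        rw [le_antisymm hmem hω, mul_zero, neg_zero, Real.exp_zero]
    _ ≤ ∫ ω, Real.exp (-(l * T ω)) ∂μ :=
        setIntegral_le_integral (integrable_exp_neg_mul hT hT0 hl)
          (ae_of_all _ fun _ => (Real.exp_pos _).le)

lemma ae_pos_of_tendsto_integral_exp_neg_mul [IsFiniteMeasure μ] (hT : AEMeasurable T μ)
    (hT0 : 0 ≤ᵐ[μ] T) (hlim : Tendsto (fun l => ∫ ω, Real.exp (-(l * T ω)) ∂μ) atTop (𝓝 0)) :
    ∀ᵐ ω ∂μ, 0 < T ω := by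
  have hle : μ.real {ω | T ω ≤ 0} ≤ 0 := ge_of_tendsto hlim <|
    eventually_ge_atTop 0 |>.mono fun _ hl => measureReal_nonpos_le_integral_exp_neg_mul hT hT0 hl
  rw [ae_iff]
  simp_rw [not_lt]
  exact (measureReal_eq_zero_iff).mp (le_antisymm hle measureReal_nonneg)

lemma measure_le_mul_of_indepFun_expMeasure [IsProbabilityMeasure μ] {ε : Ω → ℝ} {r : ℝ}
    (hr : 0 < r) (hε : AEMeasurable ε μ) (hT : AEMeasurable T μ) (hT0 : 0 ≤ᵐ[μ] T)
    (hlaw : μ.map ε = expMeasure r) (hindep : IndepFun ε T μ) {s : ℝ} (hs : 0 ≤ s) :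
    μ {ω | ε ω ≤ s * T ω} = ENNReal.ofReal (1 - ∫ ω, Real.exp (-(r * s * T ω)) ∂μ) := by
  have hset : MeasurableSet {p : ℝ × ℝ | p.2 ≤ s * p.1} :=
    measurableSet_le measurable_snd (measurable_fst.const_mul s)
  have hint := integrable_exp_neg_mul hT hT0 (mul_nonneg hr.le hs)
  have hcdf : ∀ᵐ ω ∂μ,
      μ.map ε (Iic (s * T ω)) = ENNReal.ofReal (1 - Real.exp (-(r * s * T ω))) := by
    filter_upwards [hT0] with ω hω
    rw [hlaw, expMeasure_Iic hr, if_pos (mul_nonneg hs hω), mul_assoc]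
  calc μ {ω | ε ω ≤ s * T ω} = μ.map (fun ω => (T ω, ε ω)) {p | p.2 ≤ s * p.1} :=
        (Measure.map_apply_of_aemeasurable (hT.prodMk hε) hset).symm
    _ = ∫⁻ ω, μ.map ε (Iic (s * T ω)) ∂μ := by
        rw [(indepFun_iff_map_prod_eq_prod_map_map hT hε).mp hindep.symm, Measure.prod_apply hset,
          lintegral_map' (measurable_measure_prodMk_left hset).aemeasurable hT]
        rfl
    _ = ∫⁻ ω, ENNReal.ofReal (1 - Real.exp (-(r * s * T ω))) ∂μ := lintegral_congr_ae hcdf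
    _ = ENNReal.ofReal (1 - ∫ ω, Real.exp (-(r * s * T ω)) ∂μ) := by
        have hint1 : Integrable (fun ω => 1 - Real.exp (-(r * s * T ω))) μ :=
          (integrable_const 1).sub hint
        rw [← ofReal_integral_eq_lintegral_ofReal hint1, integral_sub (integrable_const 1) hint,
          integral_const, probReal_univ, one_smul]
        filter_upwards [hT0] with ω hω
        exact sub_nonneg.2 (exp_neg_mul_le_one (mul_nonneg hr.le hs) hω)

end

lemma rpow_div_le_iff_le_rpow_inv_mul {a b α t : ℝ} (ha : 0 ≤ a) (hb : 0 < b) (hα : 0 < α)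
    (ht : 0 ≤ t) : (a / b) ^ α ≤ t ↔ a ≤ t ^ α⁻¹ * b := by
  rw [← Real.le_rpow_inv_iff_of_pos (div_nonneg ha hb.le) ht hα, div_le_iff₀ hb]

theorem stmt4_general {Ω : Type*} [MeasurableSpace Ω] (μ : Measure Ω) [IsProbabilityMeasure μ]
    (α : ℝ) (hα0 : 0 < α)
    (T : Ω → ℝ) (hTmeas : Measurable T) (hTnonneg : ∀ᵐ ω ∂μ, 0 ≤ T ω)
    (hTlap : ∀ l : ℝ, 0 ≤ l → ∫ ω, Real.exp (-(l * T ω)) ∂μ = Real.exp (-(l ^ α)))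
    (ε : Ω → ℝ) (hεmeas : Measurable ε) (hεlaw : Measure.map ε μ = expMeasure 1)
    (hindep : IndepFun ε T μ) :
    Measure.map (fun ω => (ε ω / T ω) ^ α) μ = expMeasure 1 := by
  have hT0 : ∀ᵐ ω ∂μ, 0 < T ω := by
    refine ae_pos_of_tendsto_integral_exp_neg_mul hTmeas.aemeasurable hTnonneg ?_
    refine (tendsto_congr' (eventually_ge_atTop 0 |>.mono fun l hl => (hTlap l hl).symm)).mp ?_
    exact Real.tendsto_exp_atBot.comp (tendsto_neg_atTop_atBot.comp (tendsto_rpow_atTop hα0))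
  have hε0 := ae_pos_of_map_eq_expMeasure one_pos hεmeas.aemeasurable hεlaw
  have hX : Measurable fun ω => (ε ω / T ω) ^ α := (hεmeas.div hTmeas).pow_const α
  have := isProbabilityMeasure_expMeasure one_pos
  have := Measure.isProbabilityMeasure_map (μ := μ) hX.aemeasurable
  refine Measure.ext_of_Iic _ _ fun t => ?_
  rw [Measure.map_apply hX measurableSet_Iic, expMeasure_Iic one_pos, one_mul]
  split_ifs with ht
  · have hset : (fun ω => (ε ω / T ω) ^ α) ⁻¹' Iic t =ᵐ[μ] {ω | ε ω ≤ t ^ α⁻¹ * T ω} := by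
      filter_upwards [hT0, hε0] with ω hT hε
      exact propext (rpow_div_le_iff_le_rpow_inv_mul hε.le hT hα0 ht)
    rw [measure_congr hset, measure_le_mul_of_indepFun_expMeasure one_pos hεmeas.aemeasurable
      hTmeas.aemeasurable hTnonneg hεlaw hindep (Real.rpow_nonneg ht _), one_mul,
      hTlap _ (Real.rpow_nonneg ht _), Real.rpow_inv_rpow ht hα0.ne']
  · rw [ENNReal.ofReal_zero, measure_eq_zero_iff_ae_notMem]
    filter_upwards [hT0, hε0] with ω hT hε
    exact fun hle => ht ((Real.rpow_nonneg (div_nonneg hε.le hT.le) α).trans hle)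

/-- If `T` is standard stable(α), `0 < α < 1`, and `ε` is standard exponential independent
of `T`, then `(ε/T)^α` is standard exponential. -/
theorem stmt4 {Ω : Type*} [MeasurableSpace Ω] (μ : Measure Ω) [IsProbabilityMeasure μ]
    (α : ℝ) (hα0 : 0 < α) (hα1 : α < 1)
    (T : Ω → ℝ) (hTmeas : Measurable T) (hTnonneg : ∀ᵐ ω ∂μ, 0 ≤ T ω)
    (hTlap : ∀ l : ℝ, 0 ≤ l → ∫ ω, Real.exp (-(l * T ω)) ∂μ = Real.exp (-(l ^ α)))
    (ε : Ω → ℝ) (hεmeas : Measurable ε) (hεlaw : Measure.map ε μ = expMeasure 1)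
    (hindep : IndepFun ε T μ) :
    Measure.map (fun ω => (ε ω / T ω) ^ α) μ = expMeasure 1 :=
  stmt4_general μ α hα0 T hTmeas hTnonneg hTlap ε hεmeas hεlaw hindep
end

section
/- Fix 0 < α < 1 and let T and T' be independent standard stable(α) random variables. Then for every λ ≥ 0, the Cauchy–Stieltjes transform of the ratio T/T' is E[(1 + λ·T/T')^{-1}] = (1 + λ^α)^{-1}. -/
open MeasureTheory ProbabilityTheory Real Set Filter Topology

/-!
Write `(1 + λ T/T')⁻¹ = T'/(T' + λT) = ∫₀^∞ T' e^{-t(T' + λT)} dt` and exchange the integrals.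
By independence the inner expectation factors as `E[T' e^{-tT'}] · E[e^{-tλT}]`; the first factor
is minus the derivative of the Laplace transform `e^{-t^α}`, so the product is
`α t^{α-1} e^{-(1 + λ^α) t^α}`, whose integral over `(0, ∞)` is `(1 + λ^α)⁻¹`.
-/

lemma ofReal_div_eq_lintegral_Ioi_mul_exp_neg_mul {c b : ℝ} (hc : 0 ≤ c) (hb : 0 < b) :
    ENNReal.ofReal (c / b) = ∫⁻ t in Ioi 0, ENNReal.ofReal (c * exp (-(t * b))) := by
  have hint : IntegrableOn (fun t ↦ c * exp (-(t * b))) (Ioi 0) := by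
    have h := (exp_neg_integrableOn_Ioi 0 hb).const_mul c
    simp only [mul_comm _ b, neg_mul] at h ⊢
    exact h
  rw [← ofReal_integral_eq_lintegral_ofReal hint (ae_of_all _ fun t ↦ by positivity),
    integral_const_mul]
  have h := integral_exp_mul_Ioi (neg_neg_of_pos hb) 0
  simp only [mul_zero, exp_zero, neg_mul, mul_comm _ b] at h ⊢
  rw [h, div_neg, neg_div, neg_neg, mul_one_div]

lemma ofReal_inv_one_add_mul_div_eq_lintegral_Ioi {a b l : ℝ} (ha : 0 ≤ a) (hb : 0 < b)
    (hl : 0 ≤ l) :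
    ENNReal.ofReal (1 + l * (a / b))⁻¹ =
      ∫⁻ t in Ioi 0, ENNReal.ofReal (b * exp (-(t * (b + l * a)))) := by
  rw [← ofReal_div_eq_lintegral_Ioi_mul_exp_neg_mul hb.le (by positivity)]
  congr 1
  field_simp

lemma lintegral_Ioi_mul_rpow_mul_exp_neg_mul_rpow {α b : ℝ} (hα : 0 < α) (hb : 0 < b) :
    ∫⁻ t in Ioi 0, ENNReal.ofReal (α * t ^ (α - 1) * exp (-(b * t ^ α))) = ENNReal.ofReal b⁻¹ := by
  have hint : IntegrableOn (fun t : ℝ ↦ t ^ (α - 1) * exp (-b * t ^ α)) (Ioi 0) := by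
    simpa [smul_eq_mul] using (integrableOn_Ioi_comp_rpow_iff' (fun y ↦ exp (-b * y))
      hα.ne').mpr (exp_neg_integrableOn_Ioi 0 hb)
  simp_rw [mul_assoc, ← neg_mul]
  rw [← ofReal_integral_eq_lintegral_ofReal (hint.const_mul α), integral_const_mul,
    integral_rpow_mul_exp_neg_mul_rpow hα (by linarith) hb, sub_add_cancel, div_self hα.ne',
    neg_div, div_self hα.ne', Gamma_one, rpow_neg_one]
  · field_simp
  · exact (ae_restrict_iff' measurableSet_Ioi).2 (ae_of_all _ fun t (ht : 0 < t) ↦ by positivity)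

section Laplace

variable {Ω : Type*} [MeasurableSpace Ω] {μ : Measure Ω} [IsFiniteMeasure μ] {X : Ω → ℝ}

lemma integrable_exp_neg_mul_s7 (hX : Measurable X) (h0 : ∀ᵐ ω ∂μ, 0 ≤ X ω) {x : ℝ} (hx : 0 ≤ x) :
    Integrable (fun ω ↦ exp (-(x * X ω))) μ := by
  refine (integrable_const (1 : ℝ)).mono' (hX.const_mul x).neg.exp.aestronglyMeasurable ?_
  filter_upwards [h0] with ω hω
  rw [norm_of_nonneg (exp_pos _).le, exp_le_one_iff, neg_nonpos]
  positivity

lemma ae_pos_of_tendsto_integral_exp_neg_mul_s7 (hX : Measurable X) (h0 : ∀ᵐ ω ∂μ, 0 ≤ X ω)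
    (hlim : Tendsto (fun l ↦ ∫ ω, exp (-(l * X ω)) ∂μ) atTop (𝓝 0)) :
    ∀ᵐ ω ∂μ, 0 < X ω := by
  have hmeas : MeasurableSet {ω | X ω = 0} := hX (measurableSet_singleton 0)
  have hle : ∀ l : ℝ, 0 ≤ l → μ.real {ω | X ω = 0} ≤ ∫ ω, exp (-(l * X ω)) ∂μ := by
    intro l hl
    rw [← integral_indicator_one hmeas]
    refine integral_mono_ae ((integrable_const 1).indicator hmeas)
      (integrable_exp_neg_mul_s7 hX h0 hl) (ae_of_all _ fun ω ↦ ?_)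
    by_cases h : X ω = 0
    · simp [h]
    · simp [h, (exp_pos _).le]
  have hzero : μ {ω | X ω = 0} = 0 := by
    rw [← measureReal_eq_zero_iff]
    exact le_antisymm (ge_of_tendsto hlim (eventually_ge_atTop 0 |>.mono hle)) measureReal_nonneg
  filter_upwards [h0, measure_eq_zero_iff_ae_notMem.1 hzero] with ω hω hne
  exact hω.lt_of_ne (Ne.symm hne)

lemma hasDerivAt_integral_exp_neg_mul (hX : Measurable X) (h0 : ∀ᵐ ω ∂μ, 0 ≤ X ω) {t : ℝ}
    (ht : 0 < t) :
    Integrable (fun ω ↦ X ω * exp (-(t * X ω))) μ ∧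
      HasDerivAt (fun x ↦ ∫ ω, exp (-(x * X ω)) ∂μ) (-∫ ω, X ω * exp (-(t * X ω)) ∂μ) t := by
  have hbound : ∀ᵐ ω ∂μ, ∀ x ∈ Metric.ball t (t / 2),
      ‖-(X ω * exp (-(x * X ω)))‖ ≤ 2 / t * exp (-1) := by
    filter_upwards [h0] with ω hω x hx
    rw [Metric.mem_ball, dist_comm, Real.dist_eq, abs_lt] at hx
    have hdecay : X ω * exp (-(x * X ω)) ≤ X ω * exp (-(t / 2 * X ω)) := by
      gcongr
      linarith
    have hmax := mul_exp_neg_le_exp_neg_one (t / 2 * X ω)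
    rw [norm_neg, norm_of_nonneg (by positivity), div_mul_eq_mul_div, le_div_iff₀ ht]
    nlinarith
  obtain ⟨hint, hderiv⟩ := hasDerivAt_integral_of_dominated_loc_of_deriv_le
    (F := fun x ω ↦ exp (-(x * X ω))) (F' := fun x ω ↦ -(X ω * exp (-(x * X ω))))
    (Metric.ball_mem_nhds t (half_pos ht))
    (Eventually.of_forall fun x ↦ (hX.const_mul x).neg.exp.aestronglyMeasurable)
    (integrable_exp_neg_mul_s7 hX h0 ht.le)
    (hX.mul (hX.const_mul t).neg.exp).neg.aestronglyMeasurable hbound (integrable_const _)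
    (ae_of_all _ fun ω x _ ↦ by
      simpa [mul_comm] using ((hasDerivAt_mul_const (X ω)).neg.exp (x := x)))
  exact ⟨by simpa using hint.neg, by rwa [integral_neg] at hderiv⟩

end Laplace

structure IsStdStable {Ω : Type*} [MeasurableSpace Ω] (μ : Measure Ω) (α : ℝ) (X : Ω → ℝ) :
    Prop where
  measurable : Measurable X
  ae_nonneg : ∀ᵐ ω ∂μ, 0 ≤ X ω
  integral_exp_neg_mul : ∀ l : ℝ, 0 ≤ l → ∫ ω, exp (-(l * X ω)) ∂μ = exp (-(l ^ α))

namespace IsStdStable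

variable {Ω : Type*} [MeasurableSpace Ω] {μ : Measure Ω} [IsFiniteMeasure μ] {α : ℝ}
  {X Y : Ω → ℝ}

lemma ae_pos (hX : IsStdStable μ α X) (hα : 0 < α) : ∀ᵐ ω ∂μ, 0 < X ω := by
  refine ae_pos_of_tendsto_integral_exp_neg_mul_s7 hX.measurable hX.ae_nonneg ?_
  refine (tendsto_exp_atBot.comp (tendsto_neg_atTop_atBot.comp (tendsto_rpow_atTop hα))).congr' ?_
  filter_upwards [eventually_ge_atTop 0] with l hl
  exact (hX.integral_exp_neg_mul l hl).symm

lemma integral_mul_exp_neg_mul (hX : IsStdStable μ α X) {t : ℝ} (ht : 0 < t) :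
    ∫ ω, X ω * exp (-(t * X ω)) ∂μ = α * t ^ (α - 1) * exp (-(t ^ α)) := by
  have hderiv := (hasDerivAt_integral_exp_neg_mul hX.measurable hX.ae_nonneg ht).2
  have heq : (fun x ↦ ∫ ω, exp (-(x * X ω)) ∂μ) =ᶠ[𝓝 t] fun x ↦ exp (-(x ^ α)) := by
    filter_upwards [lt_mem_nhds ht] with x hx
    exact hX.integral_exp_neg_mul x hx.le
  have hstable := (hasDerivAt_rpow_const (p := α) (Or.inl ht.ne')).neg.exp
  have := (hderiv.congr_of_eventuallyEq heq.symm).unique hstable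
  simp only [Pi.neg_apply] at this
  linear_combination -this

lemma lintegral_mul_exp_neg_mul_add (hX : IsStdStable μ α X) (hY : IsStdStable μ α Y)
    (hindep : IndepFun X Y μ) {t l : ℝ} (ht : 0 < t) (hl : 0 ≤ l) :
    ∫⁻ ω, ENNReal.ofReal (Y ω * exp (-(t * (Y ω + l * X ω)))) ∂μ =
      ENNReal.ofReal (α * t ^ (α - 1) * exp (-((1 + l ^ α) * t ^ α))) := by
  have hsplit : ∀ᵐ ω ∂μ, ENNReal.ofReal (Y ω * exp (-(t * (Y ω + l * X ω)))) =
      ENNReal.ofReal (Y ω * exp (-(t * Y ω))) * ENNReal.ofReal (exp (-(t * l * X ω))) := by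
    filter_upwards [hY.ae_nonneg] with ω hω
    rw [← ENNReal.ofReal_mul (by positivity), mul_assoc, ← exp_add]
    ring_nf
  have hXm := hX.measurable
  have hYm := hY.measurable
  have hfactors : IndepFun (fun ω ↦ ENNReal.ofReal (Y ω * exp (-(t * Y ω))))
      (fun ω ↦ ENNReal.ofReal (exp (-(t * l * X ω)))) μ :=
    hindep.symm.comp (φ := fun y ↦ ENNReal.ofReal (y * exp (-(t * y))))
      (ψ := fun x ↦ ENNReal.ofReal (exp (-(t * l * x)))) (by fun_prop) (by fun_prop)
  rw [lintegral_congr_ae hsplit, lintegral_mul_eq_lintegral_mul_lintegral_of_indepFun''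
    (by fun_prop) (by fun_prop) hfactors,
    ← ofReal_integral_eq_lintegral_ofReal
      (hasDerivAt_integral_exp_neg_mul hY.measurable hY.ae_nonneg ht).1
      (hY.ae_nonneg.mono fun ω hω ↦ by positivity),
    ← ofReal_integral_eq_lintegral_ofReal
      (integrable_exp_neg_mul_s7 hX.measurable hX.ae_nonneg (by positivity))
      (ae_of_all _ fun ω ↦ by positivity),
    hY.integral_mul_exp_neg_mul ht, hX.integral_exp_neg_mul _ (by positivity),
    ← ENNReal.ofReal_mul' (exp_pos _).le, mul_assoc, ← exp_add, mul_rpow ht.le hl]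
  ring_nf

end IsStdStable

theorem stmt7_general {Ω : Type*} [MeasurableSpace Ω] (μ : Measure Ω) [IsProbabilityMeasure μ]
    (α : ℝ) (hα0 : 0 < α)
    (T T' : Ω → ℝ) (hTmeas : Measurable T) (hT'meas : Measurable T')
    (hTnonneg : ∀ᵐ ω ∂μ, 0 ≤ T ω) (hT'nonneg : ∀ᵐ ω ∂μ, 0 ≤ T' ω)
    (hTlap : ∀ l : ℝ, 0 ≤ l → ∫ ω, Real.exp (-(l * T ω)) ∂μ = Real.exp (-(l ^ α)))
    (hT'lap : ∀ l : ℝ, 0 ≤ l → ∫ ω, Real.exp (-(l * T' ω)) ∂μ = Real.exp (-(l ^ α)))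
    (hindep : IndepFun T T' μ)
    (l : ℝ) (hl : 0 ≤ l) :
    ∫ ω, (1 + l * (T ω / T' ω))⁻¹ ∂μ = (1 + l ^ α)⁻¹ := by
  have hT : IsStdStable μ α T := ⟨hTmeas, hTnonneg, hTlap⟩
  have hT' : IsStdStable μ α T' := ⟨hT'meas, hT'nonneg, hT'lap⟩
  have hT'pos := hT'.ae_pos hα0
  have hb : 0 < 1 + l ^ α := by positivity
  have hinv_eq : ∀ᵐ ω ∂μ, ENNReal.ofReal (1 + l * (T ω / T' ω))⁻¹ =
      ∫⁻ t in Ioi 0, ENNReal.ofReal (T' ω * exp (-(t * (T' ω + l * T ω)))) := by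
    filter_upwards [hTnonneg, hT'pos] with ω hω hω'
    exact ofReal_inv_one_add_mul_div_eq_lintegral_Ioi hω hω' hl
  have hlintegral :
      ∫⁻ ω, ENNReal.ofReal (1 + l * (T ω / T' ω))⁻¹ ∂μ = ENNReal.ofReal (1 + l ^ α)⁻¹ :=
    calc ∫⁻ ω, ENNReal.ofReal (1 + l * (T ω / T' ω))⁻¹ ∂μ
        = ∫⁻ t in Ioi 0, ∫⁻ ω, ENNReal.ofReal (T' ω * exp (-(t * (T' ω + l * T ω)))) ∂μ := by
          rw [lintegral_congr_ae hinv_eq, lintegral_lintegral_swap (by fun_prop)]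
      _ = ∫⁻ t in Ioi 0, ENNReal.ofReal (α * t ^ (α - 1) * exp (-((1 + l ^ α) * t ^ α))) :=
          setLIntegral_congr_fun measurableSet_Ioi fun t ht ↦
            hT.lintegral_mul_exp_neg_mul_add hT' hindep ht hl
      _ = ENNReal.ofReal (1 + l ^ α)⁻¹ := lintegral_Ioi_mul_rpow_mul_exp_neg_mul_rpow hα0 hb
  have hnonneg : 0 ≤ᵐ[μ] fun ω ↦ (1 + l * (T ω / T' ω))⁻¹ := by
    filter_upwards [hTnonneg, hT'pos] with ω hω hω'
    positivity
  rw [integral_eq_lintegral_of_nonneg_ae hnonneg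
    (by fun_prop : Measurable _).aestronglyMeasurable, hlintegral,
    ENNReal.toReal_ofReal (inv_nonneg.2 hb.le)]

/-- Cauchy–Stieltjes transform of the ratio of two independent standard stable(α)
variables: `E[(1 + λ T/T')⁻¹] = (1 + λ^α)⁻¹` for all `λ ≥ 0`. -/
theorem stmt7 {Ω : Type*} [MeasurableSpace Ω] (μ : Measure Ω) [IsProbabilityMeasure μ]
    (α : ℝ) (hα0 : 0 < α) (hα1 : α < 1)
    (T T' : Ω → ℝ) (hTmeas : Measurable T) (hT'meas : Measurable T')
    (hTnonneg : ∀ᵐ ω ∂μ, 0 ≤ T ω) (hT'nonneg : ∀ᵐ ω ∂μ, 0 ≤ T' ω)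
    (hTlap : ∀ l : ℝ, 0 ≤ l → ∫ ω, Real.exp (-(l * T ω)) ∂μ = Real.exp (-(l ^ α)))
    (hT'lap : ∀ l : ℝ, 0 ≤ l → ∫ ω, Real.exp (-(l * T' ω)) ∂μ = Real.exp (-(l ^ α)))
    (hindep : IndepFun T T' μ)
    (l : ℝ) (hl : 0 ≤ l) :
    ∫ ω, (1 + l * (T ω / T' ω))⁻¹ ∂μ = (1 + l ^ α)⁻¹ :=
  stmt7_general μ α hα0 T T' hTmeas hT'meas hTnonneg hT'nonneg hTlap hT'lap hindep l hl
end

section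
/- Fix 0 < α < 1. Let T and T' be independent standard stable(α) random variables and let ε be a standard exponential random variable independent of (T, T'). Then for every x ≥ 0, P(ε·T/T' > x) = E_α(-x^α), where E_α is the Mittag-Leffler function E_α(z) := Σ_{k=0}^∞ z^k/Γ(kα + 1). -/
/-!
Both stable variables are a.s. positive, since `P(T = 0) ≤ E[exp(-l T)] = exp(-l^α) → 0`.
Conditioning on `(T, T')`, the exponential tail gives `P(ε T/T' > x) = E[exp(-x T'/T)]`, and
integrating out `T'` by independence leaves `E[exp(-x^α T^(-α))]`. Integrating
`Γ(s) t^(-s) = ∫₀^∞ l^(s-1) e^(-l t) dl` against the law of `T` turns the Laplace transform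
into the negative moments `E[T^(-s)] = Γ(s/α + 1)/Γ(s + 1)`, so `E[T^(-kα)] = k!/Γ(kα + 1)`.
Expanding the exponential termwise then produces the Mittag-Leffler series; the interchange is
justified because `Γ(y + 1) ≥ ⌊y⌋!` makes `∑ |c|^k/Γ(kα + 1)` converge.
-/

open MeasureTheory ProbabilityTheory Real Set Filter
open scoped Nat

namespace Real

lemma factorial_floor_le_Gamma_add_one {y : ℝ} (hy : 1 ≤ y) : (⌊y⌋₊ ! : ℝ) ≤ Gamma (y + 1) := by
  have h2 : (2 : ℝ) ≤ ⌊y⌋₊ + 1 := by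
    have : (1 : ℝ) ≤ ⌊y⌋₊ := by exact_mod_cast Nat.le_floor (by exact_mod_cast hy)
    linarith
  have hle : (⌊y⌋₊ : ℝ) + 1 ≤ y + 1 := by linarith [Nat.floor_le (zero_le_one.trans hy)]
  rw [← Gamma_nat_eq_factorial]
  exact Gamma_strictMonoOn_Ici.monotoneOn h2 (h2.trans hle) hle

lemma exists_rpow_div_Gamma_add_one_le {a : ℝ} (ha : 0 ≤ a) :
    ∃ C, ∀ y : ℝ, 1 ≤ y → a ^ y / Gamma (y + 1) ≤ C := by
  set B := max a 1
  refine ⟨B * exp B, fun y hy => ?_⟩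
  have hB : 1 ≤ B := le_max_right a 1
  set n := ⌊y⌋₊
  have hnum : a ^ y ≤ B * B ^ n :=
    calc a ^ y ≤ B ^ y := rpow_le_rpow ha (le_max_left a 1) (zero_le_one.trans hy)
      _ ≤ B ^ ((n : ℝ) + 1) := rpow_le_rpow_of_exponent_le hB (Nat.lt_floor_add_one y).le
      _ = B * B ^ n := by rw [rpow_add_one (by positivity), rpow_natCast, mul_comm]
  calc a ^ y / Gamma (y + 1) ≤ B * B ^ n / n ! :=
        div_le_div₀ (by positivity) hnum (by positivity) (factorial_floor_le_Gamma_add_one hy)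
    _ = B * (B ^ n / n !) := mul_div_assoc _ _ _
    _ ≤ B * exp B := by gcongr; exact pow_div_factorial_le_exp _ (by positivity) n

lemma summable_pow_div_Gamma_mul_add_one {α : ℝ} (hα : 0 < α) (c : ℝ) :
    Summable fun k : ℕ => c ^ k / Gamma (k * α + 1) := by
  obtain ⟨C, hC⟩ := exists_rpow_div_Gamma_add_one_le (by positivity : 0 ≤ (2 * |c|) ^ α⁻¹)
  refine Summable.of_norm_bounded_eventually_nat (summable_geometric_two.mul_left C) ?_
  filter_upwards [eventually_ge_atTop ⌈α⁻¹⌉₊] with k hk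
  have hkα : 1 ≤ (k : ℝ) * α := by
    rw [← div_le_iff₀ hα, one_div]
    exact Nat.ceil_le.mp hk
  have hpow : |c| ^ k = ((2 * |c|) ^ α⁻¹) ^ ((k : ℝ) * α) * (1 / 2) ^ k := by
    rw [← rpow_mul (by positivity), mul_comm (k : ℝ), inv_mul_cancel_left₀ hα.ne', rpow_natCast,
      ← mul_pow]
    ring_nf
  rw [norm_div, norm_pow, Real.norm_eq_abs,
    Real.norm_of_nonneg (Gamma_pos_of_pos (by positivity)).le, hpow, mul_div_right_comm]
  gcongr
  exact hC _ hkα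

end Real

section

variable {Ω : Type*} [MeasurableSpace Ω] {μ : Measure Ω}

lemma setLIntegral_Ioi_ofReal_rpow_mul {f : ℝ → ℝ} {s : ℝ}
    (hf : IntegrableOn (fun l => l ^ s * f l) (Ioi 0)) (hf0 : ∀ l, 0 < l → 0 ≤ f l) :
    ∫⁻ l in Ioi 0, ENNReal.ofReal (l ^ s) * ENNReal.ofReal (f l) =
      ENNReal.ofReal (∫ l in Ioi 0, l ^ s * f l) := by
  rw [ofReal_integral_eq_lintegral_ofReal hf]
  · refine setLIntegral_congr_fun measurableSet_Ioi fun l (hl : 0 < l) => ?_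
    rw [ENNReal.ofReal_mul (rpow_nonneg hl.le _)]
  · filter_upwards [ae_restrict_mem measurableSet_Ioi] with l (hl : 0 < l)
    exact mul_nonneg (rpow_nonneg hl.le _) (hf0 l hl)

lemma ofReal_Gamma_mul_lintegral_rpow_neg [SFinite μ] {T : Ω → ℝ} (hT : Measurable T)
    (hTpos : ∀ᵐ ω ∂μ, 0 < T ω) {s : ℝ} (hs : 0 < s) :
    ENNReal.ofReal (Gamma s) * ∫⁻ ω, ENNReal.ofReal (T ω ^ (-s)) ∂μ =
      ∫⁻ l in Ioi 0, ENNReal.ofReal (l ^ (s - 1)) *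
        ∫⁻ ω, ENNReal.ofReal (exp (-(l * T ω))) ∂μ := by
  have hslice : ∀ t : ℝ, 0 < t → ENNReal.ofReal (Gamma s) * ENNReal.ofReal (t ^ (-s)) =
      ∫⁻ l in Ioi 0, ENNReal.ofReal (l ^ (s - 1)) * ENNReal.ofReal (exp (-(l * t))) := by
    intro t ht
    have hint : IntegrableOn (fun l => l ^ (s - 1) * exp (-(l * t))) (Ioi 0) := by
      simpa [mul_comm t] using
        integrableOn_rpow_mul_exp_neg_mul_rpow (p := 1) (by linarith) one_pos ht
    rw [setLIntegral_Ioi_ofReal_rpow_mul hint fun _ _ => exp_nonneg _,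
      ← ENNReal.ofReal_mul (Gamma_pos_of_pos hs).le]
    simp_rw [mul_comm _ t]
    rw [integral_rpow_mul_exp_neg_mul_Ioi hs ht, one_div, inv_rpow ht.le, ← rpow_neg ht.le,
      mul_comm]
  calc ENNReal.ofReal (Gamma s) * ∫⁻ ω, ENNReal.ofReal (T ω ^ (-s)) ∂μ
      = ∫⁻ ω, (∫⁻ l in Ioi 0, ENNReal.ofReal (l ^ (s - 1)) *
          ENNReal.ofReal (exp (-(l * T ω)))) ∂μ := by
        rw [← lintegral_const_mul _ (by fun_prop)]
        refine lintegral_congr_ae ?_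
        filter_upwards [hTpos] with ω hω using hslice _ hω
    _ = ∫⁻ l in Ioi 0, ENNReal.ofReal (l ^ (s - 1)) *
          ∫⁻ ω, ENNReal.ofReal (exp (-(l * T ω))) ∂μ := by
        rw [lintegral_lintegral_swap ((by fun_prop : Measurable fun p : Ω × ℝ =>
          ENNReal.ofReal (p.2 ^ (s - 1)) * ENNReal.ofReal (exp (-(p.2 * T p.1))))).aemeasurable]
        refine lintegral_congr fun l => lintegral_const_mul _ ?_
        fun_prop

lemma integrable_exp_neg_mul_of_nonneg [IsFiniteMeasure μ] {T : Ω → ℝ} (hT : Measurable T)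
    (hT0 : ∀ᵐ ω ∂μ, 0 ≤ T ω) {l : ℝ} (hl : 0 ≤ l) :
    Integrable (fun ω => exp (-(l * T ω))) μ := by
  refine (integrable_const 1).mono' (by fun_prop) ?_
  filter_upwards [hT0] with ω hω
  rw [norm_of_nonneg (exp_nonneg _), exp_le_one_iff, neg_nonpos]
  positivity

lemma integral_exp_mul_eq_tsum {Z : Ω → ℝ} (hZ0 : ∀ᵐ ω ∂μ, 0 ≤ Z ω)
    (hZint : ∀ k : ℕ, Integrable (fun ω => Z ω ^ k) μ) (c : ℝ)
    (hsum : Summable fun k : ℕ => |c| ^ k * (∫ ω, Z ω ^ k ∂μ) / k !) :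
    ∫ ω, exp (c * Z ω) ∂μ = ∑' k : ℕ, c ^ k * (∫ ω, Z ω ^ k ∂μ) / k ! := by
  have hF : ∀ k : ℕ, Integrable (fun ω => (c * Z ω) ^ k / k !) μ := fun k => by
    simpa only [mul_pow, mul_div_assoc] using ((hZint k).div_const _).const_mul (c ^ k)
  have hFnorm : ∀ k : ℕ,
      ∫ ω, ‖(c * Z ω) ^ k / (k ! : ℝ)‖ ∂μ = |c| ^ k * (∫ ω, Z ω ^ k ∂μ) / k ! := by
    intro k
    rw [integral_congr_ae (g := fun ω => |c| ^ k * Z ω ^ k / (k ! : ℝ)), integral_div,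
      integral_const_mul]
    filter_upwards [hZ0] with ω hω
    simp [abs_of_nonneg hω, mul_pow]
  simp_rw [exp_eq_exp_ℝ, NormedSpace.exp_eq_tsum_div]
  rw [← integral_tsum_of_summable_integral_norm hF (by simpa only [hFnorm] using hsum)]
  simp_rw [mul_pow, integral_div, integral_const_mul]

namespace ProbabilityTheory

lemma expMeasure_Ioi {r : ℝ} (hr : 0 < r) {y : ℝ} (hy : 0 ≤ y) :
    expMeasure r (Ioi y) = ENNReal.ofReal (exp (-(r * y))) := by
  have := isProbabilityMeasure_expMeasure hr
  rw [← compl_Iic, prob_compl_eq_one_sub measurableSet_Iic, ← ofReal_measureReal,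
    ← cdf_eq_real, cdf_expMeasure_eq hr, if_pos hy, ← ENNReal.ofReal_one,
    ← ENNReal.ofReal_sub _
      (sub_nonneg.mpr (exp_le_one_iff.mpr (neg_nonpos.mpr (mul_nonneg hr.le hy)))), sub_sub_cancel]

lemma measure_lt_mul_eq_lintegral_exp [IsFiniteMeasure μ] {ε R : Ω → ℝ} (hε : Measurable ε)
    (hR : Measurable R) {r : ℝ} (hr : 0 < r) (hεlaw : μ.map ε = expMeasure r)
    (hind : IndepFun R ε μ) (hRpos : ∀ᵐ ω ∂μ, 0 < R ω) {x : ℝ} (hx : 0 ≤ x) :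
    μ {ω | x < ε ω * R ω} = ∫⁻ ω, ENNReal.ofReal (exp (-(r * x / R ω))) ∂μ := by
  have hS : MeasurableSet {p : ℝ × ℝ | x < p.2 * p.1} :=
    measurableSet_lt measurable_const (measurable_snd.mul measurable_fst)
  have hslice : ∀ q : ℝ, 0 < q →
      expMeasure r (Prod.mk q ⁻¹' {p : ℝ × ℝ | x < p.2 * p.1}) =
        ENNReal.ofReal (exp (-(r * x / q))) := by
    intro q hq
    have : Prod.mk q ⁻¹' {p : ℝ × ℝ | x < p.2 * p.1} = Ioi (x / q) := by
      ext e; simp [div_lt_iff₀ hq]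
    rw [this, expMeasure_Ioi hr (by positivity), mul_div_assoc]
  calc μ {ω | x < ε ω * R ω}
      = μ.map (fun ω => (R ω, ε ω)) {p : ℝ × ℝ | x < p.2 * p.1} :=
        (Measure.map_apply (hR.prodMk hε) hS).symm
    _ = ∫⁻ q, expMeasure r (Prod.mk q ⁻¹' {p : ℝ × ℝ | x < p.2 * p.1}) ∂μ.map R := by
        rw [(indepFun_iff_map_prod_eq_prod_map_map hR.aemeasurable hε.aemeasurable).mp hind,
          Measure.prod_apply hS, hεlaw]
    _ = ∫⁻ q, ENNReal.ofReal (exp (-(r * x / q))) ∂μ.map R := by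
        refine lintegral_congr_ae ?_
        filter_upwards [(ae_map_iff hR.aemeasurable measurableSet_Ioi).mpr hRpos] with q hq
        exact hslice q hq
    _ = ∫⁻ ω, ENNReal.ofReal (exp (-(r * x / R ω))) ∂μ :=
        lintegral_map (by fun_prop) hR

structure IsStandardStable (μ : Measure Ω) (α : ℝ) (T : Ω → ℝ) : Prop where
  measurable : Measurable T
  ae_nonneg : ∀ᵐ ω ∂μ, 0 ≤ T ω
  integral_exp_neg_mul : ∀ l : ℝ, 0 ≤ l → ∫ ω, exp (-(l * T ω)) ∂μ = exp (-(l ^ α))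

namespace IsStandardStable

variable {α : ℝ} {T : Ω → ℝ}

lemma ae_nonneg_rpow (hT : IsStandardStable μ α T) (p : ℝ) : ∀ᵐ ω ∂μ, 0 ≤ T ω ^ p := by
  filter_upwards [hT.ae_nonneg] with ω hω using rpow_nonneg hω p

lemma aestronglyMeasurable_rpow_pow (hT : IsStandardStable μ α T) (p : ℝ) (k : ℕ) :
    AEStronglyMeasurable (fun ω => (T ω ^ p) ^ k) μ :=
  ((hT.measurable.pow_const p).pow_const k).aestronglyMeasurable

section Finite

variable [IsFiniteMeasure μ]

lemma lintegral_exp_neg_mul (hT : IsStandardStable μ α T) {l : ℝ} (hl : 0 ≤ l) :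
    ∫⁻ ω, ENNReal.ofReal (exp (-(l * T ω))) ∂μ = ENNReal.ofReal (exp (-(l ^ α))) := by
  rw [← ofReal_integral_eq_lintegral_ofReal
    (integrable_exp_neg_mul_of_nonneg hT.measurable hT.ae_nonneg hl)
    (ae_of_all _ fun _ => exp_nonneg _), hT.integral_exp_neg_mul l hl]

lemma ae_pos (hT : IsStandardStable μ α T) (hα : 0 < α) : ∀ᵐ ω ∂μ, 0 < T ω := by
  have hbound : ∀ l : ℝ, 0 ≤ l → μ {ω | T ω = 0} ≤ ENNReal.ofReal (exp (-(l ^ α))) := by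
    intro l hl
    rw [← hT.lintegral_exp_neg_mul hl]
    calc μ {ω | T ω = 0} = ∫⁻ ω in {ω | T ω = 0}, ENNReal.ofReal (exp (-(l * T ω))) ∂μ := by
          rw [setLIntegral_congr_fun (measurableSet_eq_fun hT.measurable measurable_const)
            (g := fun _ => 1) fun ω (hω : T ω = 0) => by simp [hω], setLIntegral_one]
      _ ≤ _ := setLIntegral_le_lintegral _ _
  have hlim : Tendsto (fun l : ℝ => ENNReal.ofReal (exp (-(l ^ α)))) atTop (nhds 0) := by
    simpa using ENNReal.tendsto_ofReal
      (tendsto_exp_neg_atTop_nhds_zero.comp (tendsto_rpow_atTop hα))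
  have hzero : μ {ω | T ω = 0} = 0 :=
    le_antisymm (ge_of_tendsto hlim ((eventually_ge_atTop 0).mono hbound)) zero_le
  filter_upwards [hT.ae_nonneg, measure_eq_zero_iff_ae_notMem.mp hzero] with ω h0 hne
  exact h0.lt_of_ne' hne

lemma lintegral_exp_neg_mul_div (hT : IsStandardStable μ α T) {S : Ω → ℝ} (hS : Measurable S)
    (hSpos : ∀ᵐ ω ∂μ, 0 < S ω) (hind : IndepFun S T μ) {x : ℝ} (hx : 0 ≤ x) :
    ∫⁻ ω, ENNReal.ofReal (exp (-(x * T ω / S ω))) ∂μ =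
      ∫⁻ ω, ENNReal.ofReal (exp (-((x / S ω) ^ α))) ∂μ := by
  have hslice : ∀ s : ℝ, 0 < s → ∫⁻ t, ENNReal.ofReal (exp (-(x * t / s))) ∂μ.map T =
      ENNReal.ofReal (exp (-((x / s) ^ α))) := fun s hs => by
    rw [lintegral_map (by fun_prop) hT.measurable, ← hT.lintegral_exp_neg_mul (by positivity)]
    simp_rw [mul_div_right_comm]
  calc ∫⁻ ω, ENNReal.ofReal (exp (-(x * T ω / S ω))) ∂μ
      = ∫⁻ p, ENNReal.ofReal (exp (-(x * p.2 / p.1))) ∂(μ.map S).prod (μ.map T) := by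
        rw [← (indepFun_iff_map_prod_eq_prod_map_map hS.aemeasurable
            hT.measurable.aemeasurable).mp hind,
          lintegral_map (by fun_prop) (hS.prodMk hT.measurable)]
    _ = ∫⁻ s, ENNReal.ofReal (exp (-((x / s) ^ α))) ∂μ.map S := by
        rw [lintegral_prod _ (by fun_prop)]
        refine lintegral_congr_ae ?_
        filter_upwards [(ae_map_iff hS.aemeasurable measurableSet_Ioi).mpr hSpos] with s hs
        exact hslice s hs
    _ = ∫⁻ ω, ENNReal.ofReal (exp (-((x / S ω) ^ α))) ∂μ := lintegral_map (by fun_prop) hS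

lemma lintegral_rpow_neg (hT : IsStandardStable μ α T) (hα : 0 < α) {s : ℝ} (hs : 0 < s) :
    ∫⁻ ω, ENNReal.ofReal (T ω ^ (-s)) ∂μ =
      ENNReal.ofReal (Gamma (s / α + 1) / Gamma (s + 1)) := by
  have hΓ : 0 < Gamma s := Gamma_pos_of_pos hs
  have hMellin := ofReal_Gamma_mul_lintegral_rpow_neg hT.measurable (hT.ae_pos hα) hs
  rw [setLIntegral_congr_fun measurableSet_Ioi fun l (hl : 0 < l) => by
      rw [hT.lintegral_exp_neg_mul hl.le],
    setLIntegral_Ioi_ofReal_rpow_mul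
      (integrableOn_rpow_mul_exp_neg_rpow (by linarith) hα) fun _ _ => exp_nonneg _,
    integral_rpow_mul_exp_neg_rpow hα (by linarith), sub_add_cancel,
    ← ENNReal.eq_div_iff (by simpa using hΓ) ENNReal.ofReal_ne_top,
    ← ENNReal.ofReal_div_of_pos hΓ] at hMellin
  rw [hMellin, Gamma_add_one (by positivity), Gamma_add_one hs.ne']
  congr 1
  field_simp

end Finite

variable [IsProbabilityMeasure μ]

lemma lintegral_rpow_neg_pow (hT : IsStandardStable μ α T) (hα : 0 < α) (k : ℕ) :
    ∫⁻ ω, ENNReal.ofReal ((T ω ^ (-α)) ^ k) ∂μ =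
      ENNReal.ofReal (k ! / Gamma (k * α + 1)) := by
  rcases k.eq_zero_or_pos with rfl | hk
  · simp
  have hmoment := hT.lintegral_rpow_neg hα (by positivity : 0 < (k : ℝ) * α)
  rw [mul_div_cancel_right₀ _ hα.ne', Gamma_nat_eq_factorial] at hmoment
  rw [← hmoment]
  refine lintegral_congr_ae ?_
  filter_upwards [hT.ae_pos hα] with ω hω
  rw [← rpow_natCast, ← rpow_mul hω.le, neg_mul, mul_comm]

lemma integrable_rpow_neg_pow (hT : IsStandardStable μ α T) (hα : 0 < α) (k : ℕ) :
    Integrable (fun ω => (T ω ^ (-α)) ^ k) μ := by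
  rw [← lintegral_ofReal_ne_top_iff_integrable (hT.aestronglyMeasurable_rpow_pow _ k)
    ((hT.ae_nonneg_rpow _).mono fun _ h => pow_nonneg h k), hT.lintegral_rpow_neg_pow hα]
  exact ENNReal.ofReal_ne_top

lemma integral_rpow_neg_pow (hT : IsStandardStable μ α T) (hα : 0 < α) (k : ℕ) :
    ∫ ω, (T ω ^ (-α)) ^ k ∂μ = k ! / Gamma (k * α + 1) := by
  rw [integral_eq_lintegral_of_nonneg_ae ((hT.ae_nonneg_rpow _).mono fun _ h => pow_nonneg h k)
    (hT.aestronglyMeasurable_rpow_pow _ k),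
    hT.lintegral_rpow_neg_pow hα, ENNReal.toReal_ofReal (by positivity)]

lemma integral_exp_mul_rpow_neg (hT : IsStandardStable μ α T) (hα : 0 < α) (c : ℝ) :
    ∫ ω, exp (c * T ω ^ (-α)) ∂μ = ∑' k : ℕ, c ^ k / Gamma (k * α + 1) := by
  have hterm : ∀ (b : ℝ) (k : ℕ), b ^ k * (∫ ω, (T ω ^ (-α)) ^ k ∂μ) / k ! =
      b ^ k / Gamma (k * α + 1) := fun b k => by
    rw [hT.integral_rpow_neg_pow hα]
    field_simp
  rw [integral_exp_mul_eq_tsum (hT.ae_nonneg_rpow _)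
    (hT.integrable_rpow_neg_pow hα) c]
  · simp_rw [hterm]
  · simpa only [hterm] using summable_pow_div_Gamma_mul_add_one hα |c|

end IsStandardStable

end ProbabilityTheory

end

theorem stmt8_general {Ω : Type*} [MeasurableSpace Ω] (μ : Measure Ω) [IsProbabilityMeasure μ]
    (α : ℝ) (hα0 : 0 < α)
    (T T' : Ω → ℝ) (hTmeas : Measurable T) (hT'meas : Measurable T')
    (hTnonneg : ∀ᵐ ω ∂μ, 0 ≤ T ω) (hT'nonneg : ∀ᵐ ω ∂μ, 0 ≤ T' ω)
    (hTlap : ∀ l : ℝ, 0 ≤ l → ∫ ω, Real.exp (-(l * T ω)) ∂μ = Real.exp (-(l ^ α)))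
    (hT'lap : ∀ l : ℝ, 0 ≤ l → ∫ ω, Real.exp (-(l * T' ω)) ∂μ = Real.exp (-(l ^ α)))
    (hindepTT' : IndepFun T T' μ)
    (ε : Ω → ℝ) (hεmeas : Measurable ε) (hεlaw : Measure.map ε μ = expMeasure 1)
    (hindepε : IndepFun ε (fun ω => (T ω, T' ω)) μ)
    (x : ℝ) (hx : 0 ≤ x) :
    (μ {ω | x < ε ω * (T ω / T' ω)}).toReal =
      ∑' k : ℕ, (-(x ^ α)) ^ k / Real.Gamma ((k : ℝ) * α + 1) := by
  have hT : IsStandardStable μ α T := ⟨hTmeas, hTnonneg, hTlap⟩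
  have hT' : IsStandardStable μ α T' := ⟨hT'meas, hT'nonneg, hT'lap⟩
  have hTpos := hT.ae_pos hα0
  have hratio_pos : ∀ᵐ ω ∂μ, 0 < T ω / T' ω := by
    filter_upwards [hTpos, hT'.ae_pos hα0] with ω h h' using div_pos h h'
  have hind : IndepFun (fun ω => T ω / T' ω) ε μ :=
    (hindepε.comp measurable_id (measurable_fst.div measurable_snd)).symm
  have hclock : μ {ω | x < ε ω * (T ω / T' ω)} =
      ∫⁻ ω, ENNReal.ofReal (exp (-(1 * x / (T ω / T' ω)))) ∂μ :=
    measure_lt_mul_eq_lintegral_exp hεmeas (hTmeas.div hT'meas) one_pos hεlaw hind hratio_pos hx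
  simp_rw [one_mul, div_div_eq_mul_div] at hclock
  rw [hclock, hT'.lintegral_exp_neg_mul_div hTmeas hTpos hindepTT' hx,
    ← hT.integral_exp_mul_rpow_neg hα0,
    ← integral_eq_lintegral_of_nonneg_ae (f := fun ω => exp (-((x / T ω) ^ α)))
      (ae_of_all _ fun _ => exp_nonneg _)
      ((measurable_const.div hTmeas).pow_const α).neg.exp.aestronglyMeasurable]
  refine integral_congr_ae ?_
  filter_upwards [hTpos] with ω hω
  rw [div_rpow hx hω.le, rpow_neg hω.le, div_eq_mul_inv, neg_mul]

/-- Mittag-Leffler survival function: for independent standard stable(α) variables `T, T'`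
and a standard exponential `ε` independent of `(T, T')`,
`P(ε T/T' > x) = E_α(-x^α) = ∑_k (-x^α)^k / Γ(kα+1)` for all `x ≥ 0`. -/
theorem stmt8 {Ω : Type*} [MeasurableSpace Ω] (μ : Measure Ω) [IsProbabilityMeasure μ]
    (α : ℝ) (hα0 : 0 < α) (hα1 : α < 1)
    (T T' : Ω → ℝ) (hTmeas : Measurable T) (hT'meas : Measurable T')
    (hTnonneg : ∀ᵐ ω ∂μ, 0 ≤ T ω) (hT'nonneg : ∀ᵐ ω ∂μ, 0 ≤ T' ω)
    (hTlap : ∀ l : ℝ, 0 ≤ l → ∫ ω, Real.exp (-(l * T ω)) ∂μ = Real.exp (-(l ^ α)))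
    (hT'lap : ∀ l : ℝ, 0 ≤ l → ∫ ω, Real.exp (-(l * T' ω)) ∂μ = Real.exp (-(l ^ α)))
    (hindepTT' : IndepFun T T' μ)
    (ε : Ω → ℝ) (hεmeas : Measurable ε) (hεlaw : Measure.map ε μ = expMeasure 1)
    (hindepε : IndepFun ε (fun ω => (T ω, T' ω)) μ)
    (x : ℝ) (hx : 0 ≤ x) :
    (μ {ω | x < ε ω * (T ω / T' ω)}).toReal =
      ∑' k : ℕ, (-(x ^ α)) ^ k / Real.Gamma ((k : ℝ) * α + 1) :=
  stmt8_general μ α hα0 T T' hTmeas hT'meas hTnonneg hT'nonneg hTlap hT'lap hindepTT' ε hεmeas hεlaw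
    hindepε x hx
end

section
/- Fix 0 < α < 1 and 0 < p < 1, and set q := 1 - p. Let T_p and T_q be independent nonnegative random variables with Laplace transforms E[exp(-λT_p)] = exp(-p·λ^α) and E[exp(-λT_q)] = exp(-q·λ^α) for all λ ≥ 0 (the increments of a stable(α) subordinator over intervals of lengths p and q), and set M := T_p/(T_p + T_q). Then for every λ ≥ 0, E[(1 + λM)^{-1}] = (q + p(1+λ)^{α-1})/(q + p(1+λ)^α). -/
open MeasureTheory ProbabilityTheory

/-!
Since `T_p > 0` a.s., `(1 + λM)⁻¹ = Y / Z` with `Y = T_p + T_q` and `Z = (1 + λ) T_p + T_q`, and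
`Y / Z = ∫₀^∞ Y e^{-tZ} dt`. By Fubini and independence, `E[Y e^{-tZ}]` factors into Laplace
transforms of `T_p`, `T_q` and their derivatives `E[T e^{-sT}]`, which are explicit; it equals
`(p(1+λ)^{α-1} + q) · α t^{α-1} e^{-c t^α}` with `c = p(1+λ)^α + q`, whose integral over
`t > 0` is `(p(1+λ)^{α-1} + q) / c`.
-/

open Real Set Filter Topology Function

section Laplace

variable {Ω : Type*} [MeasurableSpace Ω] {μ : Measure Ω} {X : Ω → ℝ}

lemma integrable_exp_mul_of_nonpos [IsFiniteMeasure μ] (hX : Measurable X)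
    (hXnn : ∀ᵐ ω ∂μ, 0 ≤ X ω) {u : ℝ} (hu : u ≤ 0) :
    Integrable (fun ω ↦ exp (u * X ω)) μ := by
  refine (integrable_const (1 : ℝ)).mono' (by fun_prop) ?_
  filter_upwards [hXnn] with ω hω
  rw [norm_of_nonneg (exp_pos _).le, exp_le_one_iff]
  exact mul_nonpos_of_nonpos_of_nonneg hu hω

lemma Iio_subset_interior_integrableExpSet [IsFiniteMeasure μ] (hX : Measurable X)
    (hXnn : ∀ᵐ ω ∂μ, 0 ≤ X ω) : Iio 0 ⊆ interior (integrableExpSet X μ) :=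
  interior_maximal (fun _ hu ↦ integrable_exp_mul_of_nonpos hX hXnn (le_of_lt hu)) isOpen_Iio

lemma integrable_mul_exp_mul_of_neg [IsFiniteMeasure μ] (hX : Measurable X)
    (hXnn : ∀ᵐ ω ∂μ, 0 ≤ X ω) {u : ℝ} (hu : u < 0) :
    Integrable (fun ω ↦ X ω * exp (u * X ω)) μ := by
  simpa using integrable_pow_mul_exp_of_mem_interior_integrableExpSet
    (Iio_subset_interior_integrableExpSet hX hXnn hu) 1

lemma ae_pos_of_tendsto_laplace [IsFiniteMeasure μ] (hX : Measurable X)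
    (hXnn : ∀ᵐ ω ∂μ, 0 ≤ X ω)
    (hlim : Tendsto (fun s ↦ ∫ ω, exp (-(s * X ω)) ∂μ) atTop (𝓝 0)) :
    ∀ᵐ ω ∂μ, 0 < X ω := by
  have hmeas : MeasurableSet {ω | X ω ≤ 0} := measurableSet_le hX measurable_const
  -- on `{X ≤ 0}` the variable vanishes a.e., so `exp (-(s * X)) = 1` there
  have hbound : ∀ s, 0 ≤ s → μ.real {ω | X ω ≤ 0} ≤ ∫ ω, exp (-(s * X ω)) ∂μ := by
    intro s hs
    rw [← integral_indicator_one hmeas]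
    refine integral_mono_ae ((integrable_const 1).indicator hmeas) ?_ ?_
    · simpa only [← neg_mul] using integrable_exp_mul_of_nonpos hX hXnn (neg_nonpos.2 hs)
    filter_upwards [hXnn] with ω hω
    by_cases h : X ω ≤ 0
    · simp [le_antisymm h hω]
    · simp [indicator_of_notMem (show ω ∉ {ω | X ω ≤ 0} from h), (exp_pos _).le]
  have hzero : μ.real {ω | X ω ≤ 0} ≤ 0 :=
    ge_of_tendsto hlim ((eventually_ge_atTop 0).mono hbound)
  rw [ae_iff]
  simpa [not_lt] using (measureReal_eq_zero_iff).1 (le_antisymm hzero measureReal_nonneg)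

variable {c α : ℝ}

lemma ae_pos_of_laplace_eq_exp_neg_rpow [IsFiniteMeasure μ] (hX : Measurable X)
    (hXnn : ∀ᵐ ω ∂μ, 0 ≤ X ω) (hc : 0 < c) (hα : 0 < α)
    (hlap : ∀ s, 0 ≤ s → ∫ ω, exp (-(s * X ω)) ∂μ = exp (-(c * s ^ α))) :
    ∀ᵐ ω ∂μ, 0 < X ω := by
  refine ae_pos_of_tendsto_laplace hX hXnn ?_
  have h : Tendsto (fun s : ℝ ↦ exp (-(c * s ^ α))) atTop (𝓝 0) :=
    tendsto_exp_atBot.comp (tendsto_neg_atTop_atBot.comp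
      ((tendsto_rpow_atTop hα).const_mul_atTop hc))
  exact h.congr' ((eventually_ge_atTop 0).mono fun s hs ↦ (hlap s hs).symm)

/-- `E[X e^{-sX}]` is minus the derivative of the Laplace transform, i.e. of `mgf X μ (-s)`. -/
lemma integral_mul_exp_neg_of_laplace_eq_exp_neg_rpow [IsFiniteMeasure μ] (hX : Measurable X)
    (hXnn : ∀ᵐ ω ∂μ, 0 ≤ X ω)
    (hlap : ∀ s, 0 ≤ s → ∫ ω, exp (-(s * X ω)) ∂μ = exp (-(c * s ^ α))) {s : ℝ} (hs : 0 < s) :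
    ∫ ω, X ω * exp (-(s * X ω)) ∂μ = c * α * s ^ (α - 1) * exp (-(c * s ^ α)) := by
  have hmgf : HasDerivAt (mgf X μ) (∫ ω, X ω * exp (-s * X ω) ∂μ) (-s) :=
    hasDerivAt_mgf (Iio_subset_interior_integrableExpSet hX hXnn (neg_lt_zero.2 hs))
  have heq : mgf X μ =ᶠ[𝓝 (-s)] fun u ↦ exp (-(c * (-u) ^ α)) := by
    filter_upwards [eventually_lt_nhds (neg_lt_zero.2 hs)] with u hu
    simp only [mgf, ← hlap (-u) (by linarith), neg_mul, neg_neg]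
  have hderiv : HasDerivAt (fun u ↦ exp (-(c * (-u) ^ α)))
      (exp (-(c * s ^ α)) * -(c * (α * s ^ (α - 1) * -1))) (-s) := by
    simpa using ((((hasDerivAt_neg (-s)).rpow_const (p := α)
      (Or.inl (by simpa using hs.ne'))).const_mul c).neg).exp
  have := hmgf.unique (hderiv.congr_of_eventuallyEq heq)
  simp only [neg_mul] at this
  rw [this]
  ring

variable {Y : Ω → ℝ}

lemma ProbabilityTheory.IndepFun.integral_add_mul_exp_neg [IsFiniteMeasure μ]
    (hXY : IndepFun X Y μ) (hX : Measurable X) (hY : Measurable Y) (hXnn : ∀ᵐ ω ∂μ, 0 ≤ X ω)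
    (hYnn : ∀ᵐ ω ∂μ, 0 ≤ Y ω) {a b : ℝ} (ha : 0 < a) (hb : 0 < b) :
    ∫ ω, (X ω + Y ω) * exp (-(a * X ω + b * Y ω)) ∂μ =
      (∫ ω, X ω * exp (-(a * X ω)) ∂μ) * (∫ ω, exp (-(b * Y ω)) ∂μ) +
        (∫ ω, exp (-(a * X ω)) ∂μ) * ∫ ω, Y ω * exp (-(b * Y ω)) ∂μ := by
  have hXe := integrable_mul_exp_mul_of_neg hX hXnn (neg_lt_zero.2 ha)
  have hYe := integrable_mul_exp_mul_of_neg hY hYnn (neg_lt_zero.2 hb)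
  have hX0 := integrable_exp_mul_of_nonpos hX hXnn (neg_nonpos.2 ha.le)
  have hY0 := integrable_exp_mul_of_nonpos hY hYnn (neg_nonpos.2 hb.le)
  simp only [neg_mul] at hXe hYe hX0 hY0
  have h₁ : IndepFun (fun ω ↦ X ω * exp (-(a * X ω))) (fun ω ↦ exp (-(b * Y ω))) μ :=
    hXY.comp (φ := fun x ↦ x * exp (-(a * x))) (ψ := fun y ↦ exp (-(b * y)))
      (by fun_prop) (by fun_prop)
  have h₂ : IndepFun (fun ω ↦ exp (-(a * X ω))) (fun ω ↦ Y ω * exp (-(b * Y ω))) μ :=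
    hXY.comp (φ := fun x ↦ exp (-(a * x))) (ψ := fun y ↦ y * exp (-(b * y)))
      (by fun_prop) (by fun_prop)
  calc ∫ ω, (X ω + Y ω) * exp (-(a * X ω + b * Y ω)) ∂μ
      = ∫ ω, (X ω * exp (-(a * X ω)) * exp (-(b * Y ω)) +
          exp (-(a * X ω)) * (Y ω * exp (-(b * Y ω)))) ∂μ := by
        congr 1 with ω
        rw [neg_add, exp_add]
        ring
    _ = _ :=
        (integral_add (h₁.integrable_mul hXe hY0) (h₂.integrable_mul hX0 hYe)).trans
          <| congrArg₂ (· + ·)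
          (h₁.integral_mul_eq_mul_integral hXe.aestronglyMeasurable hY0.aestronglyMeasurable)
          (h₂.integral_mul_eq_mul_integral hX0.aestronglyMeasurable hYe.aestronglyMeasurable)

lemma ProbabilityTheory.IndepFun.integral_add_mul_exp_neg_of_laplace_eq [IsFiniteMeasure μ]
    (hXY : IndepFun X Y μ) (hX : Measurable X) (hY : Measurable Y) (hXnn : ∀ᵐ ω ∂μ, 0 ≤ X ω)
    (hYnn : ∀ᵐ ω ∂μ, 0 ≤ Y ω) {α a b : ℝ}
    (hlapX : ∀ s, 0 ≤ s → ∫ ω, exp (-(s * X ω)) ∂μ = exp (-(a * s ^ α)))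
    (hlapY : ∀ s, 0 ≤ s → ∫ ω, exp (-(s * Y ω)) ∂μ = exp (-(b * s ^ α)))
    {r t : ℝ} (hr : 0 < r) (ht : 0 < t) :
    ∫ ω, (X ω + Y ω) * exp (-(r * X ω + Y ω) * t) ∂μ =
      (a * r ^ (α - 1) + b) * (α * t ^ (α - 1) * exp (-(a * r ^ α + b) * t ^ α)) := by
  have hrt : 0 < t * r := mul_pos ht hr
  calc ∫ ω, (X ω + Y ω) * exp (-(r * X ω + Y ω) * t) ∂μ
      = ∫ ω, (X ω + Y ω) * exp (-(t * r * X ω + t * Y ω)) ∂μ := by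
        congr 1 with ω
        ring_nf
    _ = a * α * (t * r) ^ (α - 1) * exp (-(a * (t * r) ^ α)) * exp (-(b * t ^ α)) +
          exp (-(a * (t * r) ^ α)) * (b * α * t ^ (α - 1) * exp (-(b * t ^ α))) := by
        rw [hXY.integral_add_mul_exp_neg hX hY hXnn hYnn hrt ht,
          integral_mul_exp_neg_of_laplace_eq_exp_neg_rpow hX hXnn hlapX hrt,
          integral_mul_exp_neg_of_laplace_eq_exp_neg_rpow hY hYnn hlapY ht,
          hlapX _ hrt.le, hlapY _ ht.le]
    _ = _ := by
        have hsplit : exp (-(a * r ^ α + b) * t ^ α) =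
            exp (-(a * (t ^ α * r ^ α))) * exp (-(b * t ^ α)) := by
          rw [← exp_add]
          ring_nf
        rw [mul_rpow ht.le hr.le, mul_rpow ht.le hr.le, hsplit]
        ring

end Laplace

lemma integral_mul_exp_neg_mul_Ioi (y : ℝ) {z : ℝ} (hz : 0 < z) :
    ∫ t in Ioi 0, y * exp (-z * t) = y / z := by
  rw [integral_const_mul, integral_exp_mul_Ioi (neg_lt_zero.2 hz)]
  field_simp
  simp

lemma integral_rpow_mul_exp_neg_mul_rpow_Ioi {α c : ℝ} (hα : 0 < α) (hc : 0 < c) :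
    ∫ t in Ioi 0, α * t ^ (α - 1) * exp (-c * t ^ α) = c⁻¹ := by
  have h := integral_comp_rpow_Ioi_of_pos (g := fun y ↦ exp (-c * y)) hα
  simp only [smul_eq_mul] at h
  rw [h, ← one_div, ← integral_mul_exp_neg_mul_Ioi 1 hc]
  simp

lemma inv_one_add_mul_div_add_eq {x y : ℝ} (l : ℝ) (h : x + y ≠ 0) :
    (1 + l * (x / (x + y)))⁻¹ = (x + y) / ((1 + l) * x + y) := by
  rw [← inv_div]
  field_simp
  ring

section Stieltjes

variable {Ω : Type*} [MeasurableSpace Ω] {μ : Measure Ω} {Y Z : Ω → ℝ}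

lemma integrable_prod_mul_exp_neg_mul (hY : Measurable Y) (hZ : Measurable Z)
    (hYnn : ∀ᵐ ω ∂μ, 0 ≤ Y ω) (hZpos : ∀ᵐ ω ∂μ, 0 < Z ω)
    (hYZ : Integrable (fun ω ↦ Y ω / Z ω) μ) :
    Integrable (uncurry fun ω t ↦ Y ω * exp (-Z ω * t)) (μ.prod (volume.restrict (Ioi 0))) := by
  have hmeas : Measurable (uncurry fun ω t ↦ Y ω * exp (-Z ω * t)) := by
    simp only [uncurry_def]; fun_prop
  refine (integrable_prod_iff hmeas.aestronglyMeasurable).2 ⟨?_, hYZ.congr ?_⟩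
  · filter_upwards [hZpos] with ω hω
    exact (integrableOn_exp_mul_Ioi (neg_lt_zero.2 hω) 0).const_mul (Y ω)
  · filter_upwards [hYnn, hZpos] with ω hYω hZω
    simp_rw [uncurry_apply_pair, norm_of_nonneg (mul_nonneg hYω (exp_pos _).le)]
    exact (integral_mul_exp_neg_mul_Ioi _ hZω).symm

lemma integral_div_eq_integral_Ioi_integral_mul_exp_neg [SFinite μ] (hY : Measurable Y)
    (hZ : Measurable Z) (hYnn : ∀ᵐ ω ∂μ, 0 ≤ Y ω) (hZpos : ∀ᵐ ω ∂μ, 0 < Z ω)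
    (hYZ : Integrable (fun ω ↦ Y ω / Z ω) μ) :
    ∫ ω, Y ω / Z ω ∂μ = ∫ t in Ioi 0, ∫ ω, Y ω * exp (-Z ω * t) ∂μ := by
  rw [← integral_integral_swap (integrable_prod_mul_exp_neg_mul hY hZ hYnn hZpos hYZ)]
  refine integral_congr_ae ?_
  filter_upwards [hZpos] with ω hω
  exact (integral_mul_exp_neg_mul_Ioi _ hω).symm

end Stieltjes

theorem stmt9_general {Ω : Type*} [MeasurableSpace Ω] (μ : Measure Ω) [IsProbabilityMeasure μ]
    (α p : ℝ) (hα0 : 0 < α) (hp0 : 0 < p)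
    (q : ℝ) (hq : q = 1 - p)
    (Tp Tq : Ω → ℝ) (hTpmeas : Measurable Tp) (hTqmeas : Measurable Tq)
    (hTpnonneg : ∀ᵐ ω ∂μ, 0 ≤ Tp ω) (hTqnonneg : ∀ᵐ ω ∂μ, 0 ≤ Tq ω)
    (hTplap : ∀ l : ℝ, 0 ≤ l → ∫ ω, Real.exp (-(l * Tp ω)) ∂μ = Real.exp (-(p * l ^ α)))
    (hTqlap : ∀ l : ℝ, 0 ≤ l → ∫ ω, Real.exp (-(l * Tq ω)) ∂μ = Real.exp (-(q * l ^ α)))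
    (hindep : IndepFun Tp Tq μ)
    (M : Ω → ℝ) (hM : ∀ ω, M ω = Tp ω / (Tp ω + Tq ω))
    (l : ℝ) (hl : 0 ≤ l) :
    ∫ ω, (1 + l * M ω)⁻¹ ∂μ =
      (q + p * (1 + l) ^ (α - 1)) / (q + p * (1 + l) ^ α) := by
  have hTp_pos := ae_pos_of_laplace_eq_exp_neg_rpow hTpmeas hTpnonneg hp0 hα0 hTplap
  have hl1 : 0 < 1 + l := by linarith
  have hc : 0 < p * (1 + l) ^ α + q := by
    have := one_le_rpow (by linarith : 1 ≤ 1 + l) hα0.le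
    nlinarith
  have hM_inv : ∀ᵐ ω ∂μ, (1 + l * M ω)⁻¹ = (Tp ω + Tq ω) / ((1 + l) * Tp ω + Tq ω) := by
    filter_upwards [hTp_pos, hTqnonneg] with ω hpω hqω
    rw [hM, inv_one_add_mul_div_add_eq l (by positivity)]
  have hZpos : ∀ᵐ ω ∂μ, 0 < (1 + l) * Tp ω + Tq ω := by
    filter_upwards [hTp_pos, hTqnonneg] with ω hpω hqω
    positivity
  have hYZ : Integrable (fun ω ↦ (Tp ω + Tq ω) / ((1 + l) * Tp ω + Tq ω)) μ := by
    refine (integrable_const (1 : ℝ)).mono' (by fun_prop : Measurable _).aestronglyMeasurable ?_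
    filter_upwards [hTp_pos, hTqnonneg, hZpos] with ω hpω hqω hZω
    rw [norm_of_nonneg (by positivity), div_le_one hZω]
    nlinarith
  calc ∫ ω, (1 + l * M ω)⁻¹ ∂μ
      = ∫ ω, (Tp ω + Tq ω) / ((1 + l) * Tp ω + Tq ω) ∂μ := integral_congr_ae hM_inv
    _ = ∫ t in Ioi 0, ∫ ω, (Tp ω + Tq ω) * exp (-((1 + l) * Tp ω + Tq ω) * t) ∂μ :=
        integral_div_eq_integral_Ioi_integral_mul_exp_neg (by fun_prop) (by fun_prop)
          (by filter_upwards [hTpnonneg, hTqnonneg] with ω hpω hqω; positivity) hZpos hYZ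
    _ = ∫ t in Ioi 0, (p * (1 + l) ^ (α - 1) + q) *
          (α * t ^ (α - 1) * exp (-(p * (1 + l) ^ α + q) * t ^ α)) :=
        setIntegral_congr_fun measurableSet_Ioi fun t ht ↦
          hindep.integral_add_mul_exp_neg_of_laplace_eq hTpmeas hTqmeas hTpnonneg hTqnonneg
            hTplap hTqlap hl1 ht
    _ = _ := by
        rw [integral_const_mul, integral_rpow_mul_exp_neg_mul_rpow_Ioi hα0 hc, add_comm q,
          add_comm q, div_eq_mul_inv]

/-- Lamperti's Stieltjes transform: for `0 < α < 1`, `0 < p < 1`, `q = 1 - p`, and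
independent nonnegative `T_p, T_q` with `E[e^{-λT_p}] = e^{-pλ^α}`, `E[e^{-λT_q}] = e^{-qλ^α}`,
the variable `M := T_p/(T_p+T_q)` satisfies
`E[(1+λM)⁻¹] = (q + p(1+λ)^{α-1})/(q + p(1+λ)^α)` for all `λ ≥ 0`. -/
theorem stmt9 {Ω : Type*} [MeasurableSpace Ω] (μ : Measure Ω) [IsProbabilityMeasure μ]
    (α p : ℝ) (hα0 : 0 < α) (hα1 : α < 1) (hp0 : 0 < p) (hp1 : p < 1)
    (q : ℝ) (hq : q = 1 - p)
    (Tp Tq : Ω → ℝ) (hTpmeas : Measurable Tp) (hTqmeas : Measurable Tq)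
    (hTpnonneg : ∀ᵐ ω ∂μ, 0 ≤ Tp ω) (hTqnonneg : ∀ᵐ ω ∂μ, 0 ≤ Tq ω)
    (hTplap : ∀ l : ℝ, 0 ≤ l → ∫ ω, Real.exp (-(l * Tp ω)) ∂μ = Real.exp (-(p * l ^ α)))
    (hTqlap : ∀ l : ℝ, 0 ≤ l → ∫ ω, Real.exp (-(l * Tq ω)) ∂μ = Real.exp (-(q * l ^ α)))
    (hindep : IndepFun Tp Tq μ)
    (M : Ω → ℝ) (hM : ∀ ω, M ω = Tp ω / (Tp ω + Tq ω))
    (l : ℝ) (hl : 0 ≤ l) :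
    ∫ ω, (1 + l * M ω)⁻¹ ∂μ =
      (q + p * (1 + l) ^ (α - 1)) / (q + p * (1 + l) ^ α) :=
  stmt9_general μ α p hα0 hp0 q hq Tp Tq hTpmeas hTqmeas hTpnonneg hTqnonneg hTplap hTqlap hindep M
    hM l hl
end

section
/- Let P = (P_j)_{j≥1} be a random discrete distribution, let X be an integrable real random variable, and let (X_j)_{j≥1} be i.i.d. copies of X independent of P. Then the series X̃ := Σ_{j≥1} X_j·P_j converges absolutely almost surely, E[X̃] = E[X], and X̃ is dominated by X in the convex order: for every convex function φ: ℝ → ℝ with E|φ(X)| < ∞, one has E[φ(X̃)] ≤ E[φ(X)]. In particular, E|X̃|^r ≤ E|X|^r for every real r ≥ 1. -/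
/-!
Independence of `X_j` and `P_j` gives `E[g(X_j) P_j] = E[g(X)] E[P_j]` for measurable `g ≥ 0`,
and `∑ E[P_j] = 1`. With `g = |·|` this shows `E[∑ |X_j| P_j] = E|X| < ∞`, whence absolute
convergence a.s., integrability of `X̃`, and, exchanging sum and integral, `E[X̃] = E[X]`.
For convex `φ`, Jensen's inequality for the countable convex combination with weights `P_j(ω)`
gives `φ(X̃) ≤ ∑ φ(X_j) P_j` pointwise; the right side has mean `E[φ(X)]` by the same computation
applied to the copies `φ(X_j)`, and an affine minorant of `φ` makes `φ(X̃)` integrable.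
-/

open MeasureTheory ProbabilityTheory
open scoped ENNReal

section SumDiracOfReal

variable {ι F : Type*} [MeasurableSpace ι] [MeasurableSingletonClass ι] [Countable ι]
  [NormedAddCommGroup F] {p : ι → ℝ} {g : ι → F}

lemma integrable_sum_dirac_ofReal (hp : ∀ i, 0 ≤ p i) (hg : Summable fun i => p i * ‖g i‖) :
    Integrable g (Measure.sum fun i => ENNReal.ofReal (p i) • Measure.dirac i) :=
  integrable_sum_dirac (x := id) (fun _ => ENNReal.ofReal_ne_top) <| by
    simpa only [ENNReal.toReal_ofReal (hp _), id] using hg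

lemma integral_sum_dirac_ofReal [NormedSpace ℝ F] [CompleteSpace F] (hp : ∀ i, 0 ≤ p i)
    (hg : Summable fun i => p i * ‖g i‖) :
    ∫ i, g i ∂(Measure.sum fun i => ENNReal.ofReal (p i) • Measure.dirac i) = ∑' i, p i • g i := by
  have hg' : Summable fun i => (ENNReal.ofReal (p i)).toReal * ‖g (id i)‖ := by
    simpa only [ENNReal.toReal_ofReal (hp _), id] using hg
  simpa only [ENNReal.toReal_ofReal (hp _), id] using
    integral_sum_dirac_eq_tsum (fun _ => ENNReal.ofReal_ne_top) hg'

end SumDiracOfReal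

theorem ConvexOn.map_tsum_le {ι E : Type*} [Countable ι] [NormedAddCommGroup E] [NormedSpace ℝ E]
    [CompleteSpace E] {s : Set E} {φ : E → ℝ} (hφ : ConvexOn ℝ s φ) (hφc : ContinuousOn φ s)
    (hs : IsClosed s) {p : ι → ℝ} (hp : ∀ i, 0 ≤ p i) (hp1 : HasSum p 1) {x : ι → E}
    (hx : ∀ i, x i ∈ s) (hpx : Summable fun i => p i * ‖x i‖)
    (hpφx : Summable fun i => p i * ‖φ (x i)‖) :
    φ (∑' i, p i • x i) ≤ ∑' i, p i * φ (x i) := by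
  let _ : MeasurableSpace ι := ⊤
  have _ : MeasurableSingletonClass ι := ⟨fun _ => trivial⟩
  have _ : IsProbabilityMeasure (Measure.sum fun i => ENNReal.ofReal (p i) • Measure.dirac i) :=
    hp1.isProbabilityMeasure_sum_dirac hp
  simpa only [integral_sum_dirac_ofReal hp hpx, integral_sum_dirac_ofReal hp hpφx, smul_eq_mul]
    using hφ.map_integral_le hφc hs (.of_forall hx) (integrable_sum_dirac_ofReal hp hpx)
      (integrable_sum_dirac_ofReal hp hpφx)

lemma convexOn_abs_rpow {r : ℝ} (hr : 1 ≤ r) : ConvexOn ℝ Set.univ fun t : ℝ => |t| ^ r := by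
  have himage : (abs : ℝ → ℝ) '' Set.univ = Set.Ici 0 := by
    ext y
    exact ⟨by rintro ⟨t, -, rfl⟩; exact abs_nonneg t, fun hy => ⟨y, trivial, abs_of_nonneg hy⟩⟩
  refine ConvexOn.comp (g := (· ^ r)) ?_ convexOn_univ_norm ?_ <;> rw [himage]
  · exact convexOn_rpow hr
  · exact fun x hx y _ hxy => Real.rpow_le_rpow hx hxy (zero_le_one.trans hr)

section SummableLIntegral

variable {α E ι : Type*} [MeasurableSpace α] {μ : Measure α} [NormedAddCommGroup E] [Countable ι]
  {f : ι → α → E}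

lemma ae_summable_norm_of_tsum_lintegral_enorm_ne_top (hf : ∀ i, AEStronglyMeasurable (f i) μ)
    (hf' : ∑' i, ∫⁻ a, ‖f i a‖ₑ ∂μ ≠ ∞) :
    ∀ᵐ a ∂μ, Summable fun i => ‖f i a‖ := by
  rw [← lintegral_tsum fun i => (hf i).enorm] at hf'
  filter_upwards [ae_lt_top' (AEMeasurable.tsum fun i => (hf i).enorm) hf'] with a ha
  exact tsum_enorm_ne_top_iff_summable_norm.1 ha.ne

lemma integrable_tsum_of_tsum_lintegral_enorm_ne_top [CompleteSpace E]
    (hf : ∀ i, AEStronglyMeasurable (f i) μ) (hf' : ∑' i, ∫⁻ a, ‖f i a‖ₑ ∂μ ≠ ∞) :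
    Integrable (fun a => ∑' i, f i a) μ := by
  refine ⟨AEStronglyMeasurable.tsum hf, ?_⟩
  calc ∫⁻ a, ‖∑' i, f i a‖ₑ ∂μ ≤ ∫⁻ a, ∑' i, ‖f i a‖ₑ ∂μ :=
        lintegral_mono fun _ => enorm_tsum_le_tsum_enorm
    _ = ∑' i, ∫⁻ a, ‖f i a‖ₑ ∂μ := lintegral_tsum fun i => (hf i).enorm
    _ < ∞ := hf'.lt_top

end SummableLIntegral

structure IsRandomDiscreteDistribution {Ω : Type*} [MeasurableSpace Ω] (P : ℕ → Ω → ℝ)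
    (μ : Measure Ω) : Prop where
  measurable : ∀ j, Measurable (P j)
  ae_nonneg : ∀ j, ∀ᵐ ω ∂μ, 0 ≤ P j ω
  ae_tsum_eq_one : ∀ᵐ ω ∂μ, ∑' j, P j ω = 1

noncomputable def pMean {Ω : Type*} (P X : ℕ → Ω → ℝ) (ω : Ω) : ℝ := ∑' j, X j ω * P j ω

namespace IsRandomDiscreteDistribution

variable {Ω Ω' : Type*} [MeasurableSpace Ω] [MeasurableSpace Ω'] {μ : Measure Ω} {μ' : Measure Ω'}
  {P : ℕ → Ω → ℝ}

lemma ae_nonneg_and_hasSum (hP : IsRandomDiscreteDistribution P μ) :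
    ∀ᵐ ω ∂μ, (∀ j, 0 ≤ P j ω) ∧ HasSum (P · ω) 1 := by
  filter_upwards [ae_all_iff.2 hP.ae_nonneg, hP.ae_tsum_eq_one] with ω h0 h1
  have hs : Summable (P · ω) := by
    by_contra h
    simp [tsum_eq_zero_of_not_summable h] at h1
  exact ⟨h0, h1 ▸ hs.hasSum⟩

lemma aestronglyMeasurable_mul (hP : IsRandomDiscreteDistribution P μ) {Y : ℕ → Ω → ℝ}
    {Y₀ : Ω' → ℝ} (hY : ∀ j, IdentDistrib (Y j) Y₀ μ μ') (j : ℕ) :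
    AEStronglyMeasurable (fun ω => Y j ω * P j ω) μ :=
  (hY j).aemeasurable_fst.aestronglyMeasurable.mul (hP.measurable j).aestronglyMeasurable

variable [IsProbabilityMeasure μ]

lemma tsum_lintegral_enorm (hP : IsRandomDiscreteDistribution P μ) :
    ∑' j, ∫⁻ ω, ‖P j ω‖ₑ ∂μ = 1 := by
  rw [← lintegral_tsum fun j => (hP.measurable j).enorm.aemeasurable]
  have h1 : ∀ᵐ ω ∂μ, ∑' j, ‖P j ω‖ₑ = 1 := by
    filter_upwards [hP.ae_nonneg_and_hasSum] with ω ⟨h0, hsum⟩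
    simp_rw [Real.enorm_eq_ofReal (h0 _)]
    rw [← ENNReal.ofReal_tsum_of_nonneg h0 hsum.summable, hsum.tsum_eq, ENNReal.ofReal_one]
  simp [lintegral_congr_ae h1]

lemma tsum_integral (hP : IsRandomDiscreteDistribution P μ) : ∑' j, ∫ ω, P j ω ∂μ = 1 := by
  rw [← integral_tsum (fun j => (hP.measurable j).aestronglyMeasurable)
    (hP.tsum_lintegral_enorm ▸ ENNReal.one_ne_top), integral_congr_ae hP.ae_tsum_eq_one]
  simp

variable {β : Type*} [MeasurableSpace β]

lemma tsum_lintegral_comp_mul_enorm (hP : IsRandomDiscreteDistribution P μ) {Y : ℕ → Ω → β}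
    {Y₀ : Ω' → β} (hY : ∀ j, IdentDistrib (Y j) Y₀ μ μ') (hYP : ∀ j, IndepFun (Y j) (P j) μ)
    {g : β → ℝ≥0∞} (hg : Measurable g) :
    ∑' j, ∫⁻ ω, g (Y j ω) * ‖P j ω‖ₑ ∂μ = ∫⁻ ω, g (Y₀ ω) ∂μ' := by
  have hterm (j : ℕ) :
      ∫⁻ ω, g (Y j ω) * ‖P j ω‖ₑ ∂μ = (∫⁻ ω, g (Y₀ ω) ∂μ') * ∫⁻ ω, ‖P j ω‖ₑ ∂μ := by
    rw [show ∫⁻ ω, g (Y₀ ω) ∂μ' = ∫⁻ ω, g (Y j ω) ∂μ from ((hY j).comp hg).lintegral_eq.symm]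
    exact lintegral_mul_eq_lintegral_mul_lintegral_of_indepFun''
      (hg.comp_aemeasurable (hY j).aemeasurable_fst) (hP.measurable j).enorm.aemeasurable
      ((hYP j).comp hg measurable_enorm)
  simp_rw [hterm, ENNReal.tsum_mul_left, hP.tsum_lintegral_enorm, mul_one]

variable {Y : ℕ → Ω → ℝ} {Y₀ : Ω' → ℝ}

lemma tsum_lintegral_enorm_mul_ne_top (hP : IsRandomDiscreteDistribution P μ)
    (hY : ∀ j, IdentDistrib (Y j) Y₀ μ μ') (hYP : ∀ j, IndepFun (Y j) (P j) μ)
    (hY₀ : Integrable Y₀ μ') :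
    ∑' j, ∫⁻ ω, ‖Y j ω * P j ω‖ₑ ∂μ ≠ ∞ := by
  simp_rw [enorm_mul]
  rw [hP.tsum_lintegral_comp_mul_enorm hY hYP measurable_enorm]
  exact hY₀.2.ne

lemma ae_summable_norm_mul (hP : IsRandomDiscreteDistribution P μ)
    (hY : ∀ j, IdentDistrib (Y j) Y₀ μ μ') (hYP : ∀ j, IndepFun (Y j) (P j) μ)
    (hY₀ : Integrable Y₀ μ') :
    ∀ᵐ ω ∂μ, Summable fun j => ‖Y j ω * P j ω‖ :=
  ae_summable_norm_of_tsum_lintegral_enorm_ne_top (hP.aestronglyMeasurable_mul hY)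
    (hP.tsum_lintegral_enorm_mul_ne_top hY hYP hY₀)

lemma integrable_pMean (hP : IsRandomDiscreteDistribution P μ)
    (hY : ∀ j, IdentDistrib (Y j) Y₀ μ μ') (hYP : ∀ j, IndepFun (Y j) (P j) μ)
    (hY₀ : Integrable Y₀ μ') :
    Integrable (pMean P Y) μ :=
  integrable_tsum_of_tsum_lintegral_enorm_ne_top (hP.aestronglyMeasurable_mul hY)
    (hP.tsum_lintegral_enorm_mul_ne_top hY hYP hY₀)

lemma integral_pMean (hP : IsRandomDiscreteDistribution P μ)
    (hY : ∀ j, IdentDistrib (Y j) Y₀ μ μ') (hYP : ∀ j, IndepFun (Y j) (P j) μ)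
    (hY₀ : Integrable Y₀ μ') :
    ∫ ω, pMean P Y ω ∂μ = ∫ ω, Y₀ ω ∂μ' := by
  have hterm (j : ℕ) : ∫ ω, Y j ω * P j ω ∂μ = (∫ ω, Y₀ ω ∂μ') * ∫ ω, P j ω ∂μ := by
    rw [(hYP j).integral_fun_mul_eq_mul_integral (hY j).aemeasurable_fst.aestronglyMeasurable
      (hP.measurable j).aestronglyMeasurable, (hY j).integral_eq]
  unfold pMean
  rw [integral_tsum (hP.aestronglyMeasurable_mul hY)
    (hP.tsum_lintegral_enorm_mul_ne_top hY hYP hY₀)]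
  simp_rw [hterm, tsum_mul_left, hP.tsum_integral, mul_one]

section Convex

variable {φ : ℝ → ℝ}

lemma ae_comp_pMean_le (hP : IsRandomDiscreteDistribution P μ)
    (hY : ∀ j, IdentDistrib (Y j) Y₀ μ μ') (hYP : ∀ j, IndepFun (Y j) (P j) μ)
    (hY₀ : Integrable Y₀ μ') (hφ : ConvexOn ℝ Set.univ φ) (hφY₀ : Integrable (φ ∘ Y₀) μ') :
    ∀ᵐ ω ∂μ, φ (pMean P Y ω) ≤ pMean P (fun j => φ ∘ Y j) ω := by
  have hφc := hφ.continuousOn isOpen_univ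
  have hφm := (continuousOn_univ.1 hφc).measurable
  filter_upwards [hP.ae_nonneg_and_hasSum, hP.ae_summable_norm_mul hY hYP hY₀,
    hP.ae_summable_norm_mul (fun j => (hY j).comp hφm) (fun j => (hYP j).comp hφm measurable_id)
      hφY₀] with ω ⟨h0, h1⟩ hYs hφYs
  have hnorm (x : ℝ) (j : ℕ) : ‖x * P j ω‖ = P j ω * ‖x‖ := by
    rw [norm_mul, Real.norm_of_nonneg (h0 j), mul_comm]
  have := hφ.map_tsum_le hφc isClosed_univ h0 h1 (fun _ => trivial)
    (x := fun j => Y j ω) (by simpa only [hnorm] using hYs)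
    (by simpa only [hnorm, Function.comp_apply] using hφYs)
  simpa only [pMean, smul_eq_mul, mul_comm, Function.comp_apply] using this

lemma integrable_comp_pMean (hP : IsRandomDiscreteDistribution P μ)
    (hY : ∀ j, IdentDistrib (Y j) Y₀ μ μ') (hYP : ∀ j, IndepFun (Y j) (P j) μ)
    (hY₀ : Integrable Y₀ μ') (hφ : ConvexOn ℝ Set.univ φ) (hφY₀ : Integrable (φ ∘ Y₀) μ') :
    Integrable (fun ω => φ (pMean P Y ω)) μ := by
  have hφc := continuousOn_univ.1 (hφ.continuousOn isOpen_univ)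
  have hmean := hP.integrable_pMean hY hYP hY₀
  obtain ⟨a, b, hab⟩ :=
    hφ.exists_affine_le_real isClosed_univ (hφc.lowerSemicontinuous.lowerSemicontinuousOn _)
  have hupper := hP.integrable_pMean (fun j => (hY j).comp hφc.measurable)
    (fun j => (hYP j).comp hφc.measurable measurable_id) hφY₀
  exact integrable_of_le_of_le (hφc.comp_aestronglyMeasurable hmean.aestronglyMeasurable)
    (.of_forall fun ω => hab (pMean P Y ω) trivial) (hP.ae_comp_pMean_le hY hYP hY₀ hφ hφY₀)
    ((hmean.const_mul a).add (integrable_const b)) hupper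

lemma integral_comp_pMean_le (hP : IsRandomDiscreteDistribution P μ)
    (hY : ∀ j, IdentDistrib (Y j) Y₀ μ μ') (hYP : ∀ j, IndepFun (Y j) (P j) μ)
    (hY₀ : Integrable Y₀ μ') (hφ : ConvexOn ℝ Set.univ φ) (hφY₀ : Integrable (φ ∘ Y₀) μ') :
    ∫ ω, φ (pMean P Y ω) ∂μ ≤ ∫ ω, φ (Y₀ ω) ∂μ' := by
  have hφm := (continuousOn_univ.1 (hφ.continuousOn isOpen_univ)).measurable
  have hφY := fun j => (hY j).comp hφm
  have hφYP := fun j => (hYP j).comp hφm measurable_id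
  calc ∫ ω, φ (pMean P Y ω) ∂μ ≤ ∫ ω, pMean P (fun j => φ ∘ Y j) ω ∂μ :=
        integral_mono_ae (hP.integrable_comp_pMean hY hYP hY₀ hφ hφY₀)
          (hP.integrable_pMean hφY hφYP hφY₀) (hP.ae_comp_pMean_le hY hYP hY₀ hφ hφY₀)
    _ = ∫ ω, φ (Y₀ ω) ∂μ' := hP.integral_pMean hφY hφYP hφY₀

end Convex

lemma lintegral_abs_rpow_pMean_le (hP : IsRandomDiscreteDistribution P μ)
    (hY : ∀ j, IdentDistrib (Y j) Y₀ μ μ') (hYP : ∀ j, IndepFun (Y j) (P j) μ)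
    (hY₀ : Integrable Y₀ μ') {r : ℝ} (hr : 1 ≤ r) :
    ∫⁻ ω, ENNReal.ofReal (|pMean P Y ω| ^ r) ∂μ ≤ ∫⁻ ω, ENNReal.ofReal (|Y₀ ω| ^ r) ∂μ' := by
  by_cases hfin : ∫⁻ ω, ENNReal.ofReal (|Y₀ ω| ^ r) ∂μ' = ∞
  · exact hfin ▸ le_top
  have hY₀r : Integrable (fun ω => |Y₀ ω| ^ r) μ' :=
    (lintegral_ofReal_ne_top_iff_integrable
      ((continuous_abs.rpow_const fun _ => .inr (zero_le_one.trans hr)).comp_aestronglyMeasurable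
        hY₀.aestronglyMeasurable) (.of_forall fun _ => by positivity)).1 hfin
  have hconv := convexOn_abs_rpow hr
  rw [← ofReal_integral_eq_lintegral_ofReal hY₀r (.of_forall fun _ => by positivity),
    ← ofReal_integral_eq_lintegral_ofReal (hP.integrable_comp_pMean hY hYP hY₀ hconv hY₀r)
      (.of_forall fun _ => by positivity)]
  exact ENNReal.ofReal_le_ofReal (hP.integral_comp_pMean_le hY hYP hY₀ hconv hY₀r)

end IsRandomDiscreteDistribution

theorem stmt10_general {Ω : Type*} [MeasurableSpace Ω] (μ : Measure Ω) [IsProbabilityMeasure μ]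
    (P : ℕ → Ω → ℝ) (hPmeas : ∀ j, Measurable (P j))
    (hPnonneg : ∀ j, ∀ᵐ ω ∂μ, 0 ≤ P j ω)
    (hPsum : ∀ᵐ ω ∂μ, ∑' j, P j ω = 1)
    (X : Ω → ℝ) (hXint : Integrable X μ)
    (Xs : ℕ → Ω → ℝ)
    (hXsid : ∀ j, IdentDistrib (Xs j) X μ μ)
    (hXsindep : IndepFun (fun ω => fun j => Xs j ω) (fun ω => fun j => P j ω) μ) :
    (∀ᵐ ω ∂μ, Summable fun j => |Xs j ω * P j ω|) ∧
    (∫ ω, (∑' j, Xs j ω * P j ω) ∂μ = ∫ ω, X ω ∂μ) ∧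
    (∀ φ : ℝ → ℝ, ConvexOn ℝ Set.univ φ → Integrable (fun ω => φ (X ω)) μ →
      ∫ ω, φ (∑' j, Xs j ω * P j ω) ∂μ ≤ ∫ ω, φ (X ω) ∂μ) ∧
    (∀ r : ℝ, 1 ≤ r →
      ∫⁻ ω, ENNReal.ofReal (|∑' j, Xs j ω * P j ω| ^ r) ∂μ ≤
        ∫⁻ ω, ENNReal.ofReal (|X ω| ^ r) ∂μ) := by
  have hP : IsRandomDiscreteDistribution P μ := ⟨hPmeas, hPnonneg, hPsum⟩
  have hXP (j : ℕ) : IndepFun (Xs j) (P j) μ :=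
    hXsindep.comp (measurable_pi_apply j) (measurable_pi_apply j)
  refine ⟨?_, hP.integral_pMean hXsid hXP hXint,
    fun φ hφ hφX => hP.integral_comp_pMean_le hXsid hXP hXint hφ hφX,
    fun r hr => hP.lintegral_abs_rpow_pMean_le hXsid hXP hXint hr⟩
  simpa only [Real.norm_eq_abs] using hP.ae_summable_norm_mul hXsid hXP hXint

/-- Convex order domination of a `P`-mean: for a random discrete distribution `P`, an
integrable `X` and i.i.d. copies `(X_j)` of `X` independent of `P`, the series
`X̃ := ∑ X_j P_j` converges absolutely a.s., `E[X̃] = E[X]`, `E[φ(X̃)] ≤ E[φ(X)]` for every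
convex `φ` with `E|φ(X)| < ∞`, and `E|X̃|^r ≤ E|X|^r` for every `r ≥ 1`. -/
theorem stmt10 {Ω : Type*} [MeasurableSpace Ω] (μ : Measure Ω) [IsProbabilityMeasure μ]
    (P : ℕ → Ω → ℝ) (hPmeas : ∀ j, Measurable (P j))
    (hPnonneg : ∀ j, ∀ᵐ ω ∂μ, 0 ≤ P j ω)
    (hPsum : ∀ᵐ ω ∂μ, ∑' j, P j ω = 1)
    (X : Ω → ℝ) (hXmeas : Measurable X) (hXint : Integrable X μ)
    (Xs : ℕ → Ω → ℝ) (hXsmeas : ∀ j, Measurable (Xs j))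
    (hXsiid : iIndepFun Xs μ)
    (hXsid : ∀ j, IdentDistrib (Xs j) X μ μ)
    (hXsindep : IndepFun (fun ω => fun j => Xs j ω) (fun ω => fun j => P j ω) μ) :
    (∀ᵐ ω ∂μ, Summable fun j => |Xs j ω * P j ω|) ∧
    (∫ ω, (∑' j, Xs j ω * P j ω) ∂μ = ∫ ω, X ω ∂μ) ∧
    (∀ φ : ℝ → ℝ, ConvexOn ℝ Set.univ φ → Integrable (fun ω => φ (X ω)) μ →
      ∫ ω, φ (∑' j, Xs j ω * P j ω) ∂μ ≤ ∫ ω, φ (X ω) ∂μ) ∧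
    (∀ r : ℝ, 1 ≤ r →
      ∫⁻ ω, ENNReal.ofReal (|∑' j, Xs j ω * P j ω| ^ r) ∂μ ≤
        ∫⁻ ω, ENNReal.ofReal (|X ω| ^ r) ∂μ) :=
  stmt10_general μ P hPmeas hPnonneg hPsum X hXint Xs hXsid hXsindep
end

section
/- Fix θ > 0 and let P = (P_j)_{j≥1} be the GEM(0,θ) random discrete distribution: P_j := H_j·Π_{i=1}^{j-1}(1 - H_i) with (H_i)_{i≥1} i.i.d. Beta(1,θ). Let X be a real random variable and (X_j)_{j≥1} i.i.d. copies of X independent of (H_i)_{i≥1}. Then: if E[log(1 + |X|)] < ∞, the series Σ_{j≥1} X_j·P_j converges absolutely almost surely; and if E[log(1 + |X|)] = ∞, then Σ_{j≥1} |X_j|·P_j = ∞ almost surely. -/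
/-!
Write `S_j = ∑_{i<j} log (1 - H_i)`, so that `P_j = H_j · exp S_j`. By the strong law of large
numbers `S_j / j → L := E[log (1 - H)] < 0`, so the stick weights decay exponentially.
If `E[log (1 + |X|)] < ∞`, the first Borel–Cantelli lemma gives `log (1 + |X_j|) = o(j)`, hence
`|X_j P_j|` is eventually dominated by a geometric sequence. If `E[log (1 + |X|)] = ∞`, the second
Borel–Cantelli lemma gives `log (1 + |X_j|) > (1 - L) j` infinitely often, while `log H_j = o(j)`
because `log H` is integrable; along those `j` the terms `|X_j| P_j` grow like `e^{j/2}`.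
-/

open MeasureTheory ProbabilityTheory
open scoped ENNReal

noncomputable def betaMeasure (a b : ℝ) : Measure ℝ :=
  MeasureTheory.volume.withDensity fun u =>
    ENNReal.ofReal (Set.indicator (Set.Ioo 0 1)
      (fun u => u ^ (a - 1) * (1 - u) ^ (b - 1) *
        Real.Gamma (a + b) / (Real.Gamma a * Real.Gamma b)) u)

open Filter Set Real Topology

section BetaOne

variable {θ : ℝ}

lemma betaMeasure_one_eq_withDensity (hθ : 0 < θ) :
    _root_.betaMeasure 1 θ =
      (volume.restrict (Ioo 0 1)).withDensity fun u => ENNReal.ofReal (θ * (1 - u) ^ (θ - 1)) := by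
  have hdens : ∀ u : ℝ, u ^ ((1 : ℝ) - 1) * (1 - u) ^ (θ - 1) * Gamma (1 + θ) /
      (Gamma 1 * Gamma θ) = θ * (1 - u) ^ (θ - 1) := fun u => by
    rw [sub_self, rpow_zero, Gamma_one, add_comm, Gamma_add_one hθ.ne']
    field_simp [(Gamma_pos_of_pos hθ).ne']
  rw [_root_.betaMeasure, ← withDensity_indicator measurableSet_Ioo]
  congr 1
  funext u
  simp only [hdens]
  by_cases hu : u ∈ Ioo 0 1 <;> simp [hu]

lemma ae_mem_Ioo_betaMeasure_one (hθ : 0 < θ) : ∀ᵐ u ∂(_root_.betaMeasure 1 θ), u ∈ Ioo 0 1 := by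
  rw [betaMeasure_one_eq_withDensity hθ]
  exact (withDensity_absolutelyContinuous _ _).ae_le (ae_restrict_mem measurableSet_Ioo)

lemma integrable_betaMeasure_one_iff (hθ : 0 < θ) {g : ℝ → ℝ} :
    Integrable g (_root_.betaMeasure 1 θ) ↔
      IntegrableOn (fun u => (1 - u) ^ (θ - 1) * g u) (Ioo 0 1) := by
  rw [betaMeasure_one_eq_withDensity hθ, integrable_withDensity_iff_integrable_smul'
    (by fun_prop) (Eventually.of_forall fun _ => ENNReal.ofReal_lt_top), IntegrableOn,
    ← integrable_const_mul_iff (IsUnit.mk0 θ hθ.ne') (fun u => (1 - u) ^ (θ - 1) * g u)]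
  refine integrable_congr ((ae_restrict_iff' measurableSet_Ioo).2 (Eventually.of_forall
    fun u hu => ?_))
  have : 0 < 1 - u := by linarith [hu.2]
  simp only [smul_eq_mul]
  rw [ENNReal.toReal_ofReal (by positivity), mul_assoc]

-- Unlike `log_le_rpow_div`, this bound vanishes at `u = 1`, where it has to absorb the
-- singularity of the Beta(1,θ) density `(1 - u) ^ (θ - 1)` for `θ < 1`.
lemma neg_log_le_two_mul_one_sub_div_sqrt {u : ℝ} (hu0 : 0 < u) (hu1 : u ≤ 1) :
    -log u ≤ 2 * (1 - u) / √u := by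
  have hs : 0 < √u := sqrt_pos.2 hu0
  have hlog : 1 - (√u)⁻¹ ≤ log (√u) := one_sub_inv_le_log_of_pos hs
  rw [log_sqrt hu0.le] at hlog
  have hus : u ≤ √u := by
    rw [le_sqrt hu0.le hu0.le]; nlinarith
  rw [le_div_iff₀ hs]
  have : (√u)⁻¹ * √u = 1 := inv_mul_cancel₀ hs.ne'
  nlinarith

lemma integrable_log_betaMeasure_one (hθ : 0 < θ) : Integrable log (_root_.betaMeasure 1 θ) := by
  rw [integrable_betaMeasure_one_iff hθ]
  have hb : IntegrableOn (fun u : ℝ => 2 * u ^ (-(1 / 2) : ℝ)) (Ioo 0 1) :=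
    ((intervalIntegral.integrableOn_Ioo_rpow_iff one_pos).2 (by norm_num)).const_mul 2
  refine hb.mono' (by fun_prop) ((ae_restrict_iff' measurableSet_Ioo).2 (Eventually.of_forall
    fun u hu => ?_))
  have h1u : 0 < 1 - u := by linarith [hu.2]
  have hlog : log u ≤ 0 := log_nonpos hu.1.le hu.2.le
  rw [norm_mul, Real.norm_of_nonneg (by positivity), Real.norm_of_nonpos hlog,
    rpow_neg hu.1.le, ← sqrt_eq_rpow]
  calc (1 - u) ^ (θ - 1) * -log u ≤ (1 - u) ^ (θ - 1) * (2 * (1 - u) / √u) :=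
        mul_le_mul_of_nonneg_left (neg_log_le_two_mul_one_sub_div_sqrt hu.1 hu.2.le)
          (by positivity)
    _ = 2 * (1 - u) ^ θ / √u := by
        rw [rpow_sub_one h1u.ne']; field_simp
    _ ≤ 2 * 1 / √u := by
        gcongr
        exact rpow_le_one h1u.le (by linarith [hu.1]) hθ.le
    _ = 2 * (√u)⁻¹ := by ring

lemma integrable_log_one_sub_betaMeasure_one (hθ : 0 < θ) :
    Integrable (fun u => log (1 - u)) (_root_.betaMeasure 1 θ) := by
  rw [integrable_betaMeasure_one_iff hθ]
  have hb : IntegrableOn (fun u : ℝ => 2 / θ * (1 - u) ^ (θ / 2 - 1)) (Ioo 0 1) := by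
    have := ((intervalIntegral.intervalIntegrable_rpow' (r := θ / 2 - 1) (a := 0) (b := 1)
      (by linarith)).comp_sub_left 1).symm
    simp only [sub_zero, sub_self] at this
    exact ((intervalIntegrable_iff_integrableOn_Ioo_of_le zero_le_one).1 this).const_mul _
  refine hb.mono' (by fun_prop) ((ae_restrict_iff' measurableSet_Ioo).2 (Eventually.of_forall
    fun u hu => ?_))
  have h1u : 0 < 1 - u := by linarith [hu.2]
  have hlog : log (1 - u) ≤ 0 := log_nonpos h1u.le (by linarith [hu.1])
  have hbound : -log (1 - u) ≤ (1 - u) ^ (-(θ / 2)) / (θ / 2) := by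
    have := log_le_rpow_div (inv_pos.2 h1u).le (half_pos hθ)
    rwa [log_inv, inv_rpow h1u.le, ← rpow_neg h1u.le] at this
  rw [norm_mul, Real.norm_of_nonneg (by positivity), Real.norm_of_nonpos hlog]
  calc (1 - u) ^ (θ - 1) * -log (1 - u) ≤ (1 - u) ^ (θ - 1) * ((1 - u) ^ (-(θ / 2)) / (θ / 2)) :=
        mul_le_mul_of_nonneg_left hbound (by positivity)
    _ = 2 / θ * (1 - u) ^ (θ / 2 - 1) := by
        rw [mul_div_assoc', ← rpow_add h1u]; field_simp; ring_nf

end BetaOne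

def stickBreaking (h : ℕ → ℝ) (j : ℕ) : ℝ :=
  h j * ∏ i ∈ Finset.range j, (1 - h i)

section StickBreaking

variable {h : ℕ → ℝ}

lemma prod_one_sub_eq_exp_sum_log (hh : ∀ i, h i < 1) (j : ℕ) :
    ∏ i ∈ Finset.range j, (1 - h i) = exp (∑ i ∈ Finset.range j, log (1 - h i)) := by
  rw [exp_sum]
  exact Finset.prod_congr rfl fun i _ => (exp_log (by linarith [hh i])).symm

lemma abs_mul_stickBreaking_le (hh : ∀ i, h i ∈ Ioo 0 1) (j : ℕ) (x : ℝ) :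
    |x * stickBreaking h j| ≤
      exp (log (1 + |x|) + ∑ i ∈ Finset.range j, log (1 - h i)) := by
  have hprod : 0 ≤ ∏ i ∈ Finset.range j, (1 - h i) :=
    Finset.prod_nonneg fun i _ => by linarith [(hh i).2]
  rw [stickBreaking, exp_add, exp_log (by positivity),
    ← prod_one_sub_eq_exp_sum_log (fun i => (hh i).2) j, abs_mul,
    abs_of_nonneg (mul_nonneg (hh j).1.le hprod)]
  exact mul_le_mul (by linarith) (mul_le_of_le_one_left hprod (hh j).2.le)
    (mul_nonneg (hh j).1.le hprod) (by positivity)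

lemma exp_sub_one_le_abs_mul_stickBreaking (hh : ∀ i, h i ∈ Ioo 0 1) (j : ℕ) (x : ℝ) :
    exp (log (1 + |x|) + (log (h j) + ∑ i ∈ Finset.range j, log (1 - h i))) - 1 ≤
      |x| * stickBreaking h j := by
  have hprod : 0 ≤ ∏ i ∈ Finset.range j, (1 - h i) :=
    Finset.prod_nonneg fun i _ => by linarith [(hh i).2]
  have hP1 : h j * ∏ i ∈ Finset.range j, (1 - h i) ≤ 1 :=
    mul_le_one₀ (hh j).2.le hprod (Finset.prod_le_one (fun i _ => by linarith [(hh i).2])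
      fun i _ => by linarith [(hh i).1])
  rw [stickBreaking, exp_add, exp_add, exp_log (by positivity), exp_log (hh j).1,
    ← prod_one_sub_eq_exp_sum_log (fun i => (hh i).2) j]
  nlinarith [abs_nonneg x]

end StickBreaking

lemma summable_of_eventually_norm_le_exp {E : Type*} [NormedAddCommGroup E] [CompleteSpace E]
    {a : ℕ → E} {d : ℕ → ℝ} {L : ℝ} (hd : Tendsto (fun j => d j / j) atTop (𝓝 L)) (hL : L < 0)
    (ha : ∀ᶠ j in atTop, ‖a j‖ ≤ exp (d j)) : Summable a := by
  refine Summable.of_norm_bounded_eventually_nat (summable_geometric_of_lt_one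
    (exp_pos (L / 2)).le (exp_lt_one_iff.2 (by linarith))) ?_
  filter_upwards [ha, hd.eventually (gt_mem_nhds (by linarith : L < L / 2)),
    eventually_ge_atTop 1] with j haj hdj hj
  have hj : (0 : ℝ) < j := by exact_mod_cast hj
  rw [← exp_nat_mul]
  refine haj.trans (exp_le_exp.2 ?_)
  rw [div_lt_iff₀ hj] at hdj
  linarith

lemma tsum_ofReal_eq_top_of_frequently_lt {b d e : ℕ → ℝ} {L M : ℝ}
    (hd : Tendsto (fun j => d j / j) atTop (𝓝 L)) (hML : 0 < M + L)
    (he : ∃ᶠ j in atTop, M * j < e j) (hb : ∀ j, exp (e j + d j) - 1 ≤ b j) :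
    ∑' j, ENNReal.ofReal (b j) = ∞ := by
  refine ENNReal.eq_top_of_forall_nnreal_le fun q => ?_
  have hexp : Tendsto (fun j : ℕ => exp ((M + L) / 2 * j)) atTop atTop :=
    tendsto_exp_atTop.comp (tendsto_natCast_atTop_atTop.const_mul_atTop (by positivity))
  obtain ⟨j, hej, hdj, hqj, hj⟩ := (he.and_eventually
    ((hd.eventually (lt_mem_nhds (by linarith : L - (M + L) / 2 < L))).and
    ((hexp.eventually_ge_atTop (q + 1)).and (eventually_ge_atTop 1)))).exists
  have hj : (0 : ℝ) < j := by exact_mod_cast hj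
  rw [lt_div_iff₀ hj] at hdj
  have hqb : (q : ℝ) ≤ b j := by
    have : exp ((M + L) / 2 * j) ≤ exp (e j + d j) := exp_le_exp.2 (by linarith)
    linarith [hb j]
  calc (q : ℝ≥0∞) = ENNReal.ofReal q := ENNReal.ofReal_coe_nnreal.symm
    _ ≤ ENNReal.ofReal (b j) := ENNReal.ofReal_le_ofReal hqb
    _ ≤ ∑' j, ENNReal.ofReal (b j) := ENNReal.le_tsum j

section Probability

variable {Ω : Type*} [MeasurableSpace Ω] {μ : Measure Ω}

lemma integral_lt_zero_of_ae_lt_zero [NeZero μ] {f : Ω → ℝ} (hf : Integrable f μ)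
    (hneg : ∀ᵐ ω ∂μ, f ω < 0) : ∫ ω, f ω ∂μ < 0 := by
  have hpos : 0 < ∫ ω, -f ω ∂μ := by
    refine (integral_pos_iff_support_of_nonneg_ae (hneg.mono fun ω hω => ?_) hf.neg).2 ?_
    · simp only [Pi.zero_apply, Pi.neg_apply]; linarith
    refine pos_iff_ne_zero.2 fun h0 => ?_
    obtain ⟨ω, hω, hω'⟩ := (hneg.and (measure_eq_zero_iff_ae_notMem.1 h0)).exists
    exact hω' (neg_ne_zero.2 hω.ne)
  rw [integral_neg] at hpos
  linarith

lemma lintegral_ofReal_le_mul_tsum_measure_lt {g : Ω → ℝ} (hg : Measurable g) {M : ℝ}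
    (hM : 0 < M) :
    ∫⁻ ω, ENNReal.ofReal (g ω) ∂μ ≤ ENNReal.ofReal M * ∑' j : ℕ, μ {ω | M * j < g ω} := by
  have hmeas : ∀ j : ℕ, MeasurableSet {ω | M * j < g ω} := fun j =>
    measurableSet_lt measurable_const hg
  have hpt : ∀ ω, ENNReal.ofReal (g ω) ≤
      ∑' j : ℕ, {ω | M * j < g ω}.indicator (fun _ => ENNReal.ofReal M) ω := fun ω => by
    set n := ⌈g ω / M⌉₊
    have hterm : ∀ j ∈ Finset.range n,
        {ω | M * j < g ω}.indicator (fun _ => ENNReal.ofReal M) ω = ENNReal.ofReal M := by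
      intro j hj
      refine indicator_of_mem ?_ _
      have := Nat.lt_ceil.1 (Finset.mem_range.1 hj)
      rw [lt_div_iff₀ hM] at this
      simpa [mul_comm] using this
    calc ENNReal.ofReal (g ω) ≤ ENNReal.ofReal (n * M) :=
          ENNReal.ofReal_le_ofReal ((div_le_iff₀ hM).1 (Nat.le_ceil _))
      _ = ∑ j ∈ Finset.range n, {ω | M * j < g ω}.indicator (fun _ => ENNReal.ofReal M) ω := by
          rw [Finset.sum_congr rfl hterm, Finset.sum_const, Finset.card_range, nsmul_eq_mul,
            ENNReal.ofReal_mul (by positivity), ENNReal.ofReal_natCast]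
      _ ≤ _ := ENNReal.sum_le_tsum _
  calc ∫⁻ ω, ENNReal.ofReal (g ω) ∂μ
      ≤ ∫⁻ ω, ∑' j : ℕ, {ω | M * j < g ω}.indicator (fun _ => ENNReal.ofReal M) ω ∂μ :=
        lintegral_mono hpt
    _ = ∑' j : ℕ, ENNReal.ofReal M * μ {ω | M * j < g ω} := by
        rw [lintegral_tsum fun j => (measurable_const.indicator (hmeas j)).aemeasurable]
        exact tsum_congr fun j => lintegral_indicator_const (hmeas j) _
    _ = ENNReal.ofReal M * ∑' j : ℕ, μ {ω | M * j < g ω} := ENNReal.tsum_mul_left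

lemma ae_mem_Ioo_of_map_eq_betaMeasure_one {θ : ℝ} (hθ : 0 < θ) {h : Ω → ℝ}
    (hh : AEMeasurable h μ) (hlaw : μ.map h = _root_.betaMeasure 1 θ) :
    ∀ᵐ ω ∂μ, h ω ∈ Ioo 0 1 :=
  ae_of_ae_map hh (hlaw ▸ ae_mem_Ioo_betaMeasure_one hθ)

variable [IsProbabilityMeasure μ]

lemma ae_eventually_abs_le_mul_of_identDistrib {Z : ℕ → Ω → ℝ} (hint : Integrable (Z 0) μ)
    (hid : ∀ j, IdentDistrib (Z j) (Z 0) μ μ) {ε : ℝ} (hε : 0 < ε) :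
    ∀ᵐ ω ∂μ, ∀ᶠ j : ℕ in atTop, |Z j ω| ≤ ε * j := by
  have hmeas : Measurable fun x : ℝ => |x| / ε := by fun_prop
  have hsum : ∑' j : ℕ, μ {ω | |Z 0 ω| / ε ∈ Ioi (j : ℝ)} < ∞ := by
    let _ : MeasureSpace Ω := ⟨μ⟩
    exact tsum_prob_mem_Ioi_lt_top (hint.abs.div_const ε) fun ω => by positivity
  have hsum' : ∑' j : ℕ, μ {ω | |Z j ω| / ε ∈ Ioi (j : ℝ)} ≠ ∞ := by
    have heq : ∀ j : ℕ, μ {ω | |Z j ω| / ε ∈ Ioi (j : ℝ)} = μ {ω | |Z 0 ω| / ε ∈ Ioi (j : ℝ)} :=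
      fun j => ((hid j).comp hmeas).measure_mem_eq measurableSet_Ioi
    rw [tsum_congr heq]
    exact hsum.ne
  filter_upwards [ae_eventually_notMem hsum'] with ω hω
  filter_upwards [hω] with j hj
  simp only [mem_Ioi, not_lt, div_le_iff₀ hε] at hj
  linarith

lemma ae_tendsto_div_natCast_zero_of_identDistrib {Z : ℕ → Ω → ℝ} (hint : Integrable (Z 0) μ)
    (hid : ∀ j, IdentDistrib (Z j) (Z 0) μ μ) :
    ∀ᵐ ω ∂μ, Tendsto (fun j : ℕ => Z j ω / j) atTop (𝓝 0) := by
  have hall := ae_all_iff.2 fun k : ℕ =>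
    ae_eventually_abs_le_mul_of_identDistrib hint hid (Nat.one_div_pos_of_nat (n := k))
  filter_upwards [hall] with ω hω
  refine Metric.tendsto_nhds.2 fun ε hε => ?_
  obtain ⟨k, hk⟩ := exists_nat_one_div_lt hε
  filter_upwards [hω k, eventually_ge_atTop 1] with j hj hj1
  have hj1 : (0 : ℝ) < j := by exact_mod_cast hj1
  rw [Real.dist_eq, sub_zero, abs_div, Nat.abs_cast, div_lt_iff₀ hj1]
  nlinarith

lemma ae_frequently_lt_of_lintegral_eq_top {Z : ℕ → Ω → ℝ} (hmeas : ∀ j, Measurable (Z j))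
    (hindep : iIndepFun Z μ) (hid : ∀ j, IdentDistrib (Z j) (Z 0) μ μ)
    (htop : ∫⁻ ω, ENNReal.ofReal (Z 0 ω) ∂μ = ∞) {M : ℝ} (hM : 0 < M) :
    ∀ᵐ ω ∂μ, ∃ᶠ j in atTop, M * j < Z j ω := by
  set C : ℕ → Set Ω := fun j => Z j ⁻¹' Ioi (M * j)
  have hCmeas : ∀ j, MeasurableSet (C j) := fun j => hmeas j measurableSet_Ioi
  have hCindep : iIndepSet C μ := (iIndepSet_iff_meas_biInter hCmeas).2 fun s =>
    hindep.measure_inter_preimage_eq_mul s fun _ _ => measurableSet_Ioi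
  have hCsum : ∑' j, μ (C j) = ∞ := by
    rw [tsum_congr fun j => (hid j).measure_mem_eq measurableSet_Ioi]
    have hle := htop.symm.trans_le (lintegral_ofReal_le_mul_tsum_measure_lt (hmeas 0) hM)
    by_contra hne
    exact ENNReal.mul_ne_top ENNReal.ofReal_ne_top hne (top_le_iff.1 hle)
  have hlimsup := measure_limsup_eq_one hCmeas hCindep hCsum
  have : ∀ᵐ ω ∂μ, ω ∈ limsup C atTop :=
    (ae_mem_iff_measure_eq (MeasurableSet.measurableSet_limsup hCmeas).nullMeasurableSet).2
      (by rw [hlimsup, measure_univ])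
  filter_upwards [this] with ω hω
  exact mem_limsup_iff_frequently_mem.1 hω

lemma exists_neg_ae_tendsto_sum_log_one_sub_div {θ : ℝ} (hθ : 0 < θ) {H : ℕ → Ω → ℝ}
    (hindep : iIndepFun H μ) (hid : ∀ i, IdentDistrib (H i) (H 0) μ μ)
    (hlaw : μ.map (H 0) = _root_.betaMeasure 1 θ) :
    ∃ L < 0, ∀ᵐ ω ∂μ,
      Tendsto (fun n : ℕ => (∑ i ∈ Finset.range n, log (1 - H i ω)) / n) atTop (𝓝 L) := by
  have hmeas : Measurable fun u : ℝ => log (1 - u) := by fun_prop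
  have hint : Integrable (fun ω => log (1 - H 0 ω)) μ :=
    (hlaw ▸ integrable_log_one_sub_betaMeasure_one hθ).comp_aemeasurable (hid 0).aemeasurable_fst
  refine ⟨_, integral_lt_zero_of_ae_lt_zero hint ?_,
    strong_law_ae_real (fun i ω => log (1 - H i ω)) hint
      (fun i j hij => (hindep.indepFun hij).comp hmeas hmeas) fun i => (hid i).comp hmeas⟩
  filter_upwards [ae_mem_Ioo_of_map_eq_betaMeasure_one hθ (hid 0).aemeasurable_fst hlaw]
    with ω hω
  exact log_neg (by linarith [hω.2]) (by linarith [hω.1])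

end Probability

section RandomStickBreaking

variable {Ω : Type*} [MeasurableSpace Ω] {μ : Measure Ω} [IsProbabilityMeasure μ]
  {H Xs : ℕ → Ω → ℝ} {L : ℝ}

lemma ae_summable_abs_mul_stickBreaking (hL : L < 0) (hH : ∀ᵐ ω ∂μ, ∀ i, H i ω ∈ Ioo 0 1)
    (hS : ∀ᵐ ω ∂μ,
      Tendsto (fun n : ℕ => (∑ i ∈ Finset.range n, log (1 - H i ω)) / n) atTop (𝓝 L))
    (hXid : ∀ j, IdentDistrib (Xs j) (Xs 0) μ μ)
    (hXint : Integrable (fun ω => log (1 + |Xs 0 ω|)) μ) :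
    ∀ᵐ ω ∂μ, Summable fun j => |Xs j ω * stickBreaking (fun i => H i ω) j| := by
  have hW := ae_tendsto_div_natCast_zero_of_identDistrib hXint fun j =>
    (hXid j).comp (show Measurable fun x : ℝ => log (1 + |x|) by fun_prop)
  filter_upwards [hS, hH, hW] with ω hSω hHω hWω
  have hd := hWω.add hSω
  rw [zero_add] at hd
  refine summable_of_eventually_norm_le_exp (hd.congr fun j => (add_div _ _ _).symm) hL
    (Eventually.of_forall fun j => ?_)
  rw [norm_abs_eq_norm, Real.norm_eq_abs]
  exact abs_mul_stickBreaking_le hHω j (Xs j ω)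

lemma ae_tsum_ofReal_abs_mul_stickBreaking_eq_top (hL : L < 0)
    (hH : ∀ᵐ ω ∂μ, ∀ i, H i ω ∈ Ioo 0 1)
    (hS : ∀ᵐ ω ∂μ,
      Tendsto (fun n : ℕ => (∑ i ∈ Finset.range n, log (1 - H i ω)) / n) atTop (𝓝 L))
    (hlogH : ∀ᵐ ω ∂μ, Tendsto (fun j : ℕ => log (H j ω) / j) atTop (𝓝 0))
    (hXmeas : ∀ j, Measurable (Xs j)) (hXindep : iIndepFun Xs μ)
    (hXid : ∀ j, IdentDistrib (Xs j) (Xs 0) μ μ)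
    (hXtop : ∫⁻ ω, ENNReal.ofReal (log (1 + |Xs 0 ω|)) ∂μ = ∞) :
    ∀ᵐ ω ∂μ, ∑' j, ENNReal.ofReal (|Xs j ω| * stickBreaking (fun i => H i ω) j) = ∞ := by
  have hlog : Measurable fun x : ℝ => log (1 + |x|) := by fun_prop
  have hfreq := ae_frequently_lt_of_lintegral_eq_top (fun j => hlog.comp (hXmeas j))
    (hXindep.comp _ fun _ => hlog) (fun j => (hXid j).comp hlog) hXtop (M := 1 - L)
    (by linarith)
  filter_upwards [hS, hH, hlogH, hfreq] with ω hSω hHω hlogHω hfreqω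
  have hd := hlogHω.add hSω
  rw [zero_add] at hd
  exact tsum_ofReal_eq_top_of_frequently_lt (hd.congr fun j => (add_div _ _ _).symm)
    (by linarith : 0 < 1 - L + L) hfreqω fun j => exp_sub_one_le_abs_mul_stickBreaking hHω j _

end RandomStickBreaking

theorem stmt17_general {Ω : Type*} [MeasurableSpace Ω] (μ : Measure Ω) [IsProbabilityMeasure μ]
    (θ : ℝ) (hθ : 0 < θ)
    (H : ℕ → Ω → ℝ) (hHmeas : ∀ i, Measurable (H i))
    (hHiid : iIndepFun H μ)
    (hHlaw : ∀ i, Measure.map (H i) μ = _root_.betaMeasure 1 θ)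
    (P : ℕ → Ω → ℝ)
    (hP : ∀ j ω, P j ω = H j ω * ∏ i ∈ Finset.range j, (1 - H i ω))
    (X : Ω → ℝ)
    (Xs : ℕ → Ω → ℝ) (hXsmeas : ∀ j, Measurable (Xs j))
    (hXsiid : iIndepFun Xs μ)
    (hXsid : ∀ j, IdentDistrib (Xs j) X μ μ) :
    ((∫⁻ ω, ENNReal.ofReal (Real.log (1 + |X ω|)) ∂μ) < ∞ →
      ∀ᵐ ω ∂μ, Summable fun j => |Xs j ω * P j ω|) ∧
    ((∫⁻ ω, ENNReal.ofReal (Real.log (1 + |X ω|)) ∂μ) = ∞ →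
      ∀ᵐ ω ∂μ, ∑' j, ENNReal.ofReal (|Xs j ω| * P j ω) = ∞) := by
  obtain rfl : P = fun j ω => stickBreaking (fun i => H i ω) j := funext₂ hP
  have hHid : ∀ i, IdentDistrib (H i) (H 0) μ μ := fun i =>
    ⟨(hHmeas i).aemeasurable, (hHmeas 0).aemeasurable, (hHlaw i).trans (hHlaw 0).symm⟩
  obtain ⟨L, hL, hS⟩ := exists_neg_ae_tendsto_sum_log_one_sub_div hθ hHiid hHid (hHlaw 0)
  have hH : ∀ᵐ ω ∂μ, ∀ i, H i ω ∈ Ioo 0 1 := ae_all_iff.2 fun i =>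
    ae_mem_Ioo_of_map_eq_betaMeasure_one hθ (hHmeas i).aemeasurable (hHlaw i)
  have hXid : ∀ j, IdentDistrib (Xs j) (Xs 0) μ μ := fun j => (hXsid j).trans (hXsid 0).symm
  have hlog : Measurable fun x : ℝ => log (1 + |x|) := by fun_prop
  have hXX : ∫⁻ ω, ENNReal.ofReal (log (1 + |X ω|)) ∂μ =
      ∫⁻ ω, ENNReal.ofReal (log (1 + |Xs 0 ω|)) ∂μ :=
    ((hXsid 0).comp (ENNReal.measurable_ofReal.comp hlog)).lintegral_eq.symm
  rw [hXX]
  refine ⟨fun hfin => ae_summable_abs_mul_stickBreaking hL hH hS hXid ?_,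
    fun htop => ae_tsum_ofReal_abs_mul_stickBreaking_eq_top hL hH hS ?_ hXsmeas hXsiid hXid htop⟩
  · exact (lintegral_ofReal_ne_top_iff_integrable (hlog.comp (hXsmeas 0)).aestronglyMeasurable
      (Eventually.of_forall fun ω => log_nonneg (by simp))).1 hfin.ne
  · exact ae_tendsto_div_natCast_zero_of_identDistrib
      ((hHlaw 0 ▸ integrable_log_betaMeasure_one hθ).comp_measurable (hHmeas 0))
      fun j => (hHid j).comp measurable_log

/-- Feigin–Tweedie criterion for GEM(0,θ) means: with `P_j = H_j ∏_{i<j}(1-H_i)` for i.i.d.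
`H_i ~ Beta(1,θ)` and i.i.d. copies `(X_j)` of `X` independent of `(H_i)`: if
`E[log(1+|X|)] < ∞` then `∑_j X_j P_j` converges absolutely a.s., and if
`E[log(1+|X|)] = ∞` then `∑_j |X_j| P_j = ∞` a.s. -/
theorem stmt17 {Ω : Type*} [MeasurableSpace Ω] (μ : Measure Ω) [IsProbabilityMeasure μ]
    (θ : ℝ) (hθ : 0 < θ)
    (H : ℕ → Ω → ℝ) (hHmeas : ∀ i, Measurable (H i))
    (hHiid : iIndepFun H μ)
    (hHlaw : ∀ i, Measure.map (H i) μ = _root_.betaMeasure 1 θ)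
    (P : ℕ → Ω → ℝ)
    (hP : ∀ j ω, P j ω = H j ω * ∏ i ∈ Finset.range j, (1 - H i ω))
    (X : Ω → ℝ) (hXmeas : Measurable X)
    (Xs : ℕ → Ω → ℝ) (hXsmeas : ∀ j, Measurable (Xs j))
    (hXsiid : iIndepFun Xs μ)
    (hXsid : ∀ j, IdentDistrib (Xs j) X μ μ)
    (hXsindep : IndepFun (fun ω => fun j => Xs j ω) (fun ω => fun i => H i ω) μ) :
    ((∫⁻ ω, ENNReal.ofReal (Real.log (1 + |X ω|)) ∂μ) < ∞ →
      ∀ᵐ ω ∂μ, Summable fun j => |Xs j ω * P j ω|) ∧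
    ((∫⁻ ω, ENNReal.ofReal (Real.log (1 + |X ω|)) ∂μ) = ∞ →
      ∀ᵐ ω ∂μ, ∑' j, ENNReal.ofReal (|Xs j ω| * P j ω) = ∞) :=
  stmt17_general μ θ hθ H hHmeas hHiid hHlaw P hP X Xs hXsmeas hXsiid hXsid
end
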